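/- arXiv:1409.6215 — 7 statements merged into one kernel-verified Lean document; each statement's English description precedes it below -/
import Mathlib

section
/- Let m, n ≥ 1, let A, B be m×n matrices with entries in ℝ∞ = ℝ ∪ {+∞}, and let S ⊆ {1, …, n}. Then exactly one of the following two statements holds: (1) there exists x ∈ ℝ∞^n with A ⊙ x ≤ B ⊙ x such that x_i is finite for every i ∈ S; (2) there exists y ∈ ℝ∞^m with B^T ⊙ y < A^T ⊙ y such that the i-th coordinate of B^T ⊙ y is finite for some i ∈ S. -/
/-- The min-plus matrix-vector product over `ℝ∞ = ℝ ∪ {+∞}`: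
`(A ⊙ x)_i = min_j (A_{ij} + x_j)`. -/
noncomputable def minPlusMul {m n : ℕ} (A : Fin m → Fin n → WithTop ℝ)
    (x : Fin n → WithTop ℝ) (i : Fin m) : WithTop ℝ :=
  Finset.univ.inf (fun j => A i j + x j)

/-- Strict inequality of vectors over `ℝ∞`: in every coordinate either both sides are
`+∞` or the strict inequality holds. -/
def ltVec {m : ℕ} (u v : Fin m → WithTop ℝ) : Prop :=
  ∀ i, (u i = ⊤ ∧ v i = ⊤) ∨ u i < v i

/-!
For solutions `x` and `y` of the two systems, pairing gives
`min_j ((Aᵀ ⊙ y)_j + x_j) = min_i (y_i + (A ⊙ x)_i) ≤ min_i (y_i + (B ⊙ x)_i)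
  = min_j ((Bᵀ ⊙ y)_j + x_j) < ⊤`,
while at a coordinate attaining the left-hand side `Bᵀ ⊙ y < Aᵀ ⊙ y` makes the right-hand side
strictly smaller.

Conversely, solutions of `A ⊙ x ≤ B ⊙ x` are closed under coordinatewise minima, so it is enough
to treat `S = {s}`, which is done by Fourier–Motzkin elimination of a column `c ≠ s`. Row `i`
with `B i c < A i c` bounds `x c` from below by `min_{j ≠ c} (A i j + x j) - B i c`; substituting
these bounds into the other rows gives a system without `x c`, i.e. with one column less. A solution
of it extends to the original system by taking `x c` as large as the rows allow, and a dual
solution `t` of it pulls back to `y = Pᵀ ⊙ t`, where `P` is the matrix of the row combinations,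
perturbed by a small `η < 0` so that `Bᵀ ⊙ y < Aᵀ ⊙ y` also holds in column `c`. With one column
left, `x = 0` works unless some `B i s < A i s`, and then `y` is the unit vector at `i`.
-/

open Finset Function Filter Topology

local notation "ℝ∞" => WithTop ℝ

namespace MinPlus

section Algebra

variable {R ι ι' κ μ : Type*} [LinearOrderedAddCommMonoidWithTop R]

lemma add_finset_inf (s : Finset ι) (a : R) (f : ι → R) : a + s.inf f = s.inf fun i => a + f i :=
  apply_inf_eq_inf_comp (a + ·) (fun x y => (min_add_add_left a x y).symm) (add_top a)

lemma finset_inf_add (s : Finset ι) (f : ι → R) (a : R) : s.inf f + a = s.inf fun i => f i + a := by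
  simpa only [add_comm] using add_finset_inf s a f

lemma lt_finset_inf_of_forall_ne_top {α : Type*} [LinearOrder α] [OrderTop α] {s : Finset ι}
    {f : ι → α} {b : α} (hs : s.inf f ≠ ⊤) (h : ∀ i ∈ s, f i ≠ ⊤ → b < f i) : b < s.inf f := by
  have hne : s.Nonempty := nonempty_iff_ne_empty.2 (by rintro rfl; exact hs inf_empty)
  obtain ⟨i, hi, hfi⟩ := exists_mem_eq_inf s hne f
  rw [hfi] at hs ⊢
  exact h i hi hs

def mulVec [Fintype κ] (A : ι → κ → R) (x : κ → R) : ι → R := fun i => univ.inf fun j => A i j + x j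

def mul [Fintype ι] (P : μ → ι → R) (A : ι → κ → R) : μ → κ → R :=
  fun r j => univ.inf fun i => P r i + A i j

lemma mulVec_mulVec [Fintype ι] [Fintype κ] (P : μ → ι → R) (A : ι → κ → R) (x : κ → R) :
    mulVec P (mulVec A x) = mulVec (mul P A) x := by
  ext r
  simp only [mulVec, mul, add_finset_inf, finset_inf_add, add_assoc]
  exact Finset.inf_comm _ _ _

lemma mulVec_swap_mulVec_swap [Fintype ι] [Fintype μ] (P : μ → ι → R) (A : ι → κ → R)
    (t : μ → R) : mulVec (swap A) (mulVec (swap P) t) = mulVec (swap (mul P A)) t := by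
  rw [mulVec_mulVec]
  congr 1
  ext j r
  simp only [mul, swap, add_comm]

lemma inf_mulVec_swap_add [Fintype ι] [Fintype κ] (A : ι → κ → R) (x : κ → R) (y : ι → R) :
    (univ.inf fun j => mulVec (swap A) y j + x j) = univ.inf fun i => y i + mulVec A x i := by
  simp only [mulVec, swap, finset_inf_add, add_finset_inf]
  rw [Finset.inf_comm]
  simp only [add_comm (y _), add_assoc]

lemma mulVec_le_mulVec [Fintype κ] {M : ι → κ → R} {N : ι' → κ → R} {i : ι} {i' : ι'}
    (h : ∀ j, M i j ≤ N i' j) (x : κ → R) : mulVec M x i ≤ mulVec N x i' :=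
  inf_mono_fun fun j _ => add_le_add_left (h j) _

lemma mulVec_add_le_mulVec [Fintype κ] {M : ι → κ → R} {N : ι' → κ → R} {i : ι} {i' : ι'}
    {a : R} (h : ∀ j, M i j + a ≤ N i' j) (x : κ → R) : mulVec M x i + a ≤ mulVec N x i' := by
  rw [mulVec, finset_inf_add]
  exact inf_mono_fun fun j _ => (add_right_comm _ _ _).le.trans (add_le_add_left (h j) _)

lemma mulVec_inf [Fintype κ] (A : ι → κ → R) (x y : κ → R) :
    mulVec A (x ⊓ y) = mulVec A x ⊓ mulVec A y := by
  ext i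
  simp only [mulVec, Pi.inf_apply, ← min_add_add_left]
  exact inf_inf

lemma mulVec_top [Fintype κ] (A : ι → κ → R) : mulVec A ⊤ = ⊤ := by
  ext i
  simp [mulVec]

lemma mulVec_finset_inf [Fintype κ] (A : ι → κ → R) (s : Finset μ) (F : μ → κ → R) :
    mulVec A (s.inf F) = s.inf fun t => mulVec A (F t) :=
  apply_inf_eq_inf_comp (mulVec A) (mulVec_inf A) (mulVec_top A)

lemma inf_univ_eq_inf_inf_subtype_ne {α : Type*} [Fintype κ] [DecidableEq κ] [SemilatticeInf α]
    [OrderTop α] (f : κ → α) (c : κ) : univ.inf f = f c ⊓ univ.inf fun j : {j // j ≠ c} => f j := by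
  refine le_antisymm (le_inf (inf_le (mem_univ c)) (Finset.le_inf fun j _ => inf_le (mem_univ _)))
    (Finset.le_inf fun j _ => ?_)
  by_cases h : j = c
  · exact h ▸ inf_le_left
  · exact inf_le_right.trans (inf_le (f := fun j : {j // j ≠ c} => f j) (mem_univ ⟨j, h⟩))

lemma mulVec_dite [Fintype κ] [DecidableEq κ] (A : ι → κ → R) (c : κ) (u : R)
    (x : {j // j ≠ c} → R) (i : ι) :
    mulVec A (fun j => if h : j = c then u else x ⟨j, h⟩) i =
      (A i c + u) ⊓ mulVec (fun i (j : {j // j ≠ c}) => A i j) x i := by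
  rw [mulVec, inf_univ_eq_inf_inf_subtype_ne _ c]
  simp only [dite_true, mulVec]
  congr 2 with j
  rw [dif_neg j.2]

def unitVec [DecidableEq ι] (i : ι) : ι → R := fun r => if r = i then 0 else ⊤

lemma inf_unitVec_add [Fintype ι] [DecidableEq ι] (i : ι) (f : ι → R) :
    (univ.inf fun r => unitVec i r + f r) = f i := by
  refine le_antisymm ((inf_le (mem_univ i)).trans (by simp [unitVec])) (Finset.le_inf fun r _ => ?_)
  by_cases h : r = i <;> simp [unitVec, h]

lemma mulVec_unitVec [Fintype ι] [DecidableEq ι] (M : μ → ι → R) (i : ι) :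
    mulVec M (unitVec i) = fun r => M r i := by
  ext r
  exact (inf_congr rfl fun _ _ => add_comm _ _).trans (inf_unitVec_add i (M r))

end Algebra

section Arithmetic

variable {a b : ℝ∞}

lemma add_sub_cancel_of_ne_top (ha : a ≠ ⊤) (m : ℝ∞) : a + (m - a) = m := by
  lift a to ℝ using ha
  induction m using WithTop.recTopCoe <;>
    simp [← WithTop.LinearOrderedAddCommGroup.coe_sub, ← WithTop.coe_add]

lemma sub_add_add_cancel_of_ne_top (hb : b ≠ ⊤) (a η : ℝ∞) : a - b + η + b = a + η := by
  lift b to ℝ using hb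
  induction a using WithTop.recTopCoe <;> induction η using WithTop.recTopCoe <;>
    simp [← WithTop.LinearOrderedAddCommGroup.coe_sub, ← WithTop.coe_add]
  ring

lemma le_add_sub_of_sub_add_le {l m : ℝ∞} (ha : a ≠ ⊤) (hb : b ≠ ⊤) (h : a - b + l ≤ m) :
    l ≤ b + (m - a) := by
  lift a to ℝ using ha
  lift b to ℝ using hb
  induction l using WithTop.recTopCoe <;> induction m using WithTop.recTopCoe <;>
    simp_all [← WithTop.LinearOrderedAddCommGroup.coe_sub, ← WithTop.coe_add]
  linarith

lemma add_coe_add_lt_inf_sub_add {a' t : ℝ∞} {η : ℝ} (hη : η < 0) (hb : b < a')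
    (h : a ⊓ (a - b + η + a') + t ≠ ⊤) : a + η + t < a ⊓ (a - b + η + a') + t := by
  obtain ⟨ha, ht⟩ : a ≠ ⊤ ∧ t ≠ ⊤ := by
    refine ⟨fun ha => ?_, fun ht => h (by simp [ht])⟩
    simp [ha] at h
  lift a to ℝ using ha
  lift t to ℝ using ht
  lift b to ℝ using hb.ne_top
  induction a' using WithTop.recTopCoe
  · simp only [add_top, inf_top_eq, ← WithTop.coe_add, WithTop.coe_lt_coe]
    linarith
  · simp only [← WithTop.coe_add, ← WithTop.LinearOrderedAddCommGroup.coe_sub, ← WithTop.coe_min,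
      WithTop.coe_lt_coe] at hb ⊢
    exact add_lt_add_left (lt_min (by linarith) (by linarith)) t

lemma exists_neg_forall_lt_add {ι : Type*} [Finite ι] {u v : ι → ℝ∞}
    (h : ∀ i, v i ≠ ⊤ → u i < v i) : ∃ η : ℝ, η < 0 ∧ ∀ i, v i ≠ ⊤ → u i < v i + η := by
  have hev : ∀ᶠ η : ℝ in 𝓝 0, ∀ i, v i ≠ ⊤ → u i < v i + η := by
    refine eventually_all.2 fun i => ?_
    by_cases hv : v i = ⊤
    · exact Eventually.of_forall fun _ h' => absurd hv h'
    have hlt := h i hv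
    lift v i to ℝ using hv with b
    lift u i to ℝ using hlt.ne_top with a
    filter_upwards [Ioi_mem_nhds (sub_neg.2 (WithTop.coe_lt_coe.1 hlt))] with η hη _
    rw [← WithTop.coe_add, WithTop.coe_lt_coe]
    linarith [Set.mem_Ioi.1 hη]
  obtain ⟨η, hη, hη0⟩ := ((hev.filter_mono nhdsWithin_le_nhds).and
    (self_mem_nhdsWithin : Set.Iio (0 : ℝ) ∈ 𝓝[<] 0)).exists
  exact ⟨η, hη0, hη⟩

end Arithmetic

variable {ι κ : Type*}

def PrimalFeasible [Fintype κ] (A B : ι → κ → ℝ∞) (S : Set κ) : Prop :=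
  ∃ x, mulVec A x ≤ mulVec B x ∧ ∀ j ∈ S, x j ≠ ⊤

def DualFeasible [Fintype ι] [Fintype κ] (A B : ι → κ → ℝ∞) (S : Set κ) : Prop :=
  ∃ y, (∀ j, mulVec (swap A) y j ≠ ⊤ → mulVec (swap B) y j < mulVec (swap A) y j) ∧
    ∃ j ∈ S, mulVec (swap B) y j ≠ ⊤

theorem not_primalFeasible_and_dualFeasible [Fintype ι] [Fintype κ] (A B : ι → κ → ℝ∞)
    (S : Set κ) : ¬ (PrimalFeasible A B S ∧ DualFeasible A B S) := by
  rintro ⟨⟨x, hx, hxS⟩, y, hy, j₀, hj₀S, hj₀⟩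
  have hAB : (univ.inf fun j => mulVec (swap A) y j + x j) ≤
      univ.inf fun j => mulVec (swap B) y j + x j := by
    simp only [inf_mulVec_swap_add]
    exact inf_mono_fun fun i _ => add_le_add_right (hx i) _
  have hB : (univ.inf fun j => mulVec (swap B) y j + x j) ≠ ⊤ :=
    ne_top_of_le_ne_top (WithTop.add_ne_top.2 ⟨hj₀, hxS j₀ hj₀S⟩) (inf_le (mem_univ j₀))
  refine hAB.not_gt (lt_finset_inf_of_forall_ne_top (ne_top_of_le_ne_top hB hAB) fun j _ hj => ?_)
  obtain ⟨hyj, hxj⟩ := WithTop.add_ne_top.1 hj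
  exact (inf_le (mem_univ j)).trans_lt (WithTop.add_lt_add_right hxj (hy j hyj))

lemma primalFeasible_of_forall_singleton [Fintype κ] {A B : ι → κ → ℝ∞} {S : Set κ}
    (h : ∀ s ∈ S, PrimalFeasible A B {s}) : PrimalFeasible A B S := by
  have hx : ∀ s, ∃ x, mulVec A x ≤ mulVec B x ∧ (s ∈ S → x s ≠ ⊤) := fun s => by
    by_cases hs : s ∈ S
    · obtain ⟨x, hx, hxs⟩ := h s hs
      exact ⟨x, hx, fun _ => hxs s rfl⟩
    · exact ⟨⊤, by simp only [mulVec_top, le_refl], fun h' => absurd h' hs⟩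
  choose x hxAB hxS using hx
  refine ⟨univ.inf x, ?_, fun j hj => ?_⟩
  · simp only [mulVec_finset_inf]
    exact inf_mono_fun fun s _ => hxAB s
  · exact ne_top_of_le_ne_top (hxS j hj) (by rw [Finset.inf_apply]; exact inf_le (mem_univ j))

section Elimination

variable (A B : ι → κ → ℝ∞) (c : κ)

/-- Rows of the system obtained by eliminating `x c`: the rows of `A` in which `x c` does not
occur, and the pairs `(i, i')` where row `i'` bounds `x c` from below. -/
abbrev ElimRow := {i // A i c = ⊤} ⊕ ι × {i // B i c < A i c}

/-- Row `(i, i')` substitutes the lower bound on `x c` given by row `i'` into row `i`; the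
perturbation `η` is only needed to pull dual solutions back. -/
noncomputable def combination [DecidableEq ι] (η : ℝ∞) : ElimRow A B c → ι → ℝ∞
  | .inl i => unitVec i.1
  | .inr (i, i') => unitVec i ⊓ fun r => A i c - B i' c + η + unitVec i'.1 r

noncomputable def elimA [Fintype ι] [DecidableEq ι] : ElimRow A B c → {j // j ≠ c} → ℝ∞ :=
  mul (combination A B c 0) fun i j => A i j

def elimB : ElimRow A B c → {j // j ≠ c} → ℝ∞ := fun ρ j => B (ρ.elim Subtype.val Prod.fst) j

lemma combination_add_le [DecidableEq ι] {η : ℝ∞} (hη : η ≤ 0) (ρ : ElimRow A B c) (r : ι) :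
    combination A B c 0 ρ r + η ≤ combination A B c η ρ r := by
  rcases ρ with i | ⟨i, i'⟩
  · exact add_le_of_nonpos_right hη
  · simp only [combination, Pi.inf_apply, ← min_add_add_right]
    exact inf_le_inf (add_le_of_nonpos_right hη) (by rw [add_zero, add_right_comm])

variable [Fintype ι] [DecidableEq ι]

lemma mulVec_combination_inl (η : ℝ∞) (v : ι → ℝ∞) (i : {i // A i c = ⊤}) :
    mulVec (combination A B c η) v (.inl i) = v i :=
  inf_unitVec_add i.1 v

lemma mulVec_combination_inr (η : ℝ∞) (v : ι → ℝ∞) (i : ι) (i' : {i // B i c < A i c}) :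
    mulVec (combination A B c η) v (.inr (i, i')) = v i ⊓ (A i c - B i' c + η + v i') := by
  have hsplit : ∀ r, combination A B c η (.inr (i, i')) r + v r =
      (unitVec i r + v r) ⊓ (A i c - B i' c + η + (unitVec i'.1 r + v r)) := fun r => by
    simp only [combination, Pi.inf_apply, ← min_add_add_right, add_assoc]
  simp only [mulVec, hsplit]
  exact Finset.inf_inf.trans (by rw [← add_finset_inf, inf_unitVec_add, inf_unitVec_add])

lemma mul_combination_le {μ : Type*} (η : ℝ∞) (M : ι → μ → ℝ∞) (ρ : ElimRow A B c) (j : μ) :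
    mul (combination A B c η) M ρ j ≤ M (ρ.elim Subtype.val Prod.fst) j := by
  rcases ρ with i | ⟨i, i'⟩
  · exact (mulVec_combination_inl A B c η (fun r => M r j) i).le
  · exact (mulVec_combination_inr A B c η (fun r => M r j) i i').trans_le inf_le_left

lemma mulVec_swap_mul_combination_lt [Fintype κ] {η : ℝ} (hη : η < 0) (t : ElimRow A B c → ℝ∞)
    (h : mulVec (swap (mul (combination A B c η) A)) t c ≠ ⊤) :
    mulVec (swap (mul (combination A B c η) B)) t c <
      mulVec (swap (mul (combination A B c η) A)) t c := by
  refine lt_finset_inf_of_forall_ne_top h fun ρ _ hρ => ?_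
  rcases ρ with ⟨i, hi⟩ | ⟨i, i'⟩
  · have htop : mul (combination A B c η) A (.inl ⟨i, hi⟩) c = ⊤ :=
      (mulVec_combination_inl A B c η (fun r => A r c) ⟨i, hi⟩).trans hi
    exact absurd (by simp [swap, htop]) hρ
  · have hB : mul (combination A B c η) B (.inr (i, i')) c ≤ A i c + η :=
      (mulVec_combination_inr A B c η (fun r => B r c) i i').trans_le
        (inf_le_right.trans_eq (sub_add_add_cancel_of_ne_top i'.2.ne_top _ _))
    have hA := mulVec_combination_inr A B c η (fun r => A r c) i i'
    change mulVec (combination A B c η) (fun r => A r c) (.inr (i, i')) + t _ ≠ ⊤ at hρ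
    rw [hA] at hρ
    calc mulVec (swap (mul (combination A B c η) B)) t c
        ≤ mul (combination A B c η) B (.inr (i, i')) c + t (.inr (i, i')) := inf_le (mem_univ _)
      _ ≤ A i c + η + t (.inr (i, i')) := add_le_add_left hB _
      _ < _ := (add_coe_add_lt_inf_sub_add hη i'.2 hρ).trans_eq (by rw [← hA]; rfl)

lemma primalFeasible_of_elim [Fintype κ] [DecidableEq κ] {S : Set κ} (hc : c ∉ S)
    (h : PrimalFeasible (elimA A B c) (elimB A B c) (Subtype.val ⁻¹' S)) :
    PrimalFeasible A B S := by
  obtain ⟨x, hx, hxS⟩ := h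
  set L := mulVec (fun i (j : {j // j ≠ c}) => A i j) x
  set LB := mulVec (fun i (j : {j // j ≠ c}) => B i j) x
  have hρ : ∀ ρ, mulVec (combination A B c 0) L ρ ≤ LB (ρ.elim Subtype.val Prod.fst) :=
    fun ρ => (congrFun (mulVec_mulVec _ _ x) ρ).trans_le (hx ρ)
  have hinl : ∀ i, A i c = ⊤ → L i ≤ LB i := fun i hi => by
    simpa only [mulVec_combination_inl, Sum.elim_inl] using hρ (.inl ⟨i, hi⟩)
  have hinr : ∀ i i', B i' c < A i' c → L i ⊓ (A i c - B i' c + L i') ≤ LB i :=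
    fun i i' hi' => by
      simpa only [mulVec_combination_inr, add_zero, Sum.elim_inr] using hρ (.inr (i, ⟨i', hi'⟩))
  -- the largest value of `x c` that the rows with `LB k < L k` allow
  set u := (univ.filter fun k => ¬ L k ≤ LB k).inf fun k => LB k - A k c
  refine ⟨fun j => if h : j = c then u else x ⟨j, h⟩, fun i => ?_, fun j hj => ?_⟩
  · rw [mulVec_dite, mulVec_dite]
    refine le_inf ?_ ?_
    · rcases le_or_gt (A i c) (B i c) with hAB | hBA
      · exact inf_le_left.trans (add_le_add_left hAB u)
      · refine inf_le_right.trans ?_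
        rw [add_finset_inf]
        refine Finset.le_inf fun k hk => ?_
        have hk : ¬ L k ≤ LB k := (mem_filter.1 hk).2
        exact le_add_sub_of_sub_add_le (fun h => hk (hinl k h)) hBA.ne_top
          ((inf_le_iff.1 (hinr k i hBA)).resolve_left hk)
    · by_cases hL : L i ≤ LB i
      · exact inf_le_right.trans hL
      · calc (A i c + u) ⊓ L i ≤ A i c + (LB i - A i c) :=
            inf_le_left.trans (add_le_add_right (inf_le (mem_filter.2 ⟨mem_univ i, hL⟩)) _)
          _ = LB i := add_sub_cancel_of_ne_top (fun h => hL (hinl i h)) _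
  · have hjc : j ≠ c := fun h => hc (h ▸ hj)
    simpa [hjc] using hxS ⟨j, hjc⟩ hj

lemma dualFeasible_of_elim [Fintype κ] [DecidableEq κ] {S : Set κ} (hc : c ∉ S)
    (h : DualFeasible (elimA A B c) (elimB A B c) (Subtype.val ⁻¹' S)) :
    DualFeasible A B S := by
  obtain ⟨t, ht, j₀, hj₀S, hj₀⟩ := h
  obtain ⟨η, hη, htη⟩ := exists_neg_forall_lt_add ht
  set y := mulVec (swap (combination A B c η)) t
  have hB : ∀ j : {j // j ≠ c}, mulVec (swap B) y j ≤ mulVec (swap (elimB A B c)) t j :=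
    fun j => by
      rw [mulVec_swap_mulVec_swap]
      exact mulVec_le_mulVec (fun ρ => mul_combination_le A B c η B ρ j) t
  have hA : ∀ j : {j // j ≠ c}, mulVec (swap (elimA A B c)) t j + η ≤ mulVec (swap A) y j :=
    fun j => by
      rw [mulVec_swap_mulVec_swap]
      exact mulVec_add_le_mulVec (fun ρ => mulVec_add_le_mulVec
        (combination_add_le A B c (WithTop.coe_le_zero.2 hη.le) ρ) _) t
  refine ⟨y, fun j hj => ?_, j₀, hj₀S, ((hB j₀).trans_lt hj₀.lt_top).ne⟩
  by_cases hjc : j = c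
  · subst hjc
    simp only [y, mulVec_swap_mulVec_swap] at hj ⊢
    exact mulVec_swap_mul_combination_lt A B j hη t hj
  · have hA' := hA ⟨j, hjc⟩
    have hfin : mulVec (swap (elimA A B c)) t ⟨j, hjc⟩ ≠ ⊤ := fun h' => hj
      (top_le_iff.1 (by simpa [h'] using hA'))
    exact (hB ⟨j, hjc⟩).trans_lt ((htη _ hfin).trans_le hA')

end Elimination

lemma dualFeasible_of_subsingleton [Fintype ι] [DecidableEq ι] [Fintype κ] [Subsingleton κ]
    {A B : ι → κ → ℝ∞} {s : κ} (h : ¬ PrimalFeasible A B {s}) : DualFeasible A B {s} := by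
  have hmulVec : ∀ (M : ι → κ → ℝ∞) x i, mulVec M x i = M i s + x s := fun M x i => by
    rw [mulVec, Finset.eq_singleton_iff_unique_mem.2 ⟨mem_univ s, fun j _ => Subsingleton.elim j s⟩,
      inf_singleton]
  obtain ⟨i, hi⟩ : ∃ i, B i s < A i s := by
    by_contra! hAB
    exact h ⟨0, fun i => by simpa only [hmulVec] using add_le_add_left (hAB i) _, by simp⟩
  refine ⟨unitVec i, fun j _ => ?_, s, rfl, ?_⟩
  · simpa only [mulVec_unitVec, swap, Subsingleton.elim j s] using hi
  · simpa only [mulVec_unitVec, swap] using hi.ne_top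

theorem dualFeasible_of_not_primalFeasible_singleton [Fintype ι] [Fintype κ]
    {A B : ι → κ → ℝ∞} {s : κ} (h : ¬ PrimalFeasible A B {s}) : DualFeasible A B {s} := by
  classical
  refine Fintype.induction_subsingleton_or_nontrivial
    (P := fun κ _ => ∀ (ι : Type _) [Fintype ι] (A B : ι → κ → ℝ∞) (s : κ),
      ¬ PrimalFeasible A B {s} → DualFeasible A B {s})
    κ (fun κ _ _ ι _ A B s h => dualFeasible_of_subsingleton h)
    (fun κ _ _ ih ι _ A B s h => ?_) ι A B s h
  obtain ⟨c, hcs⟩ := exists_ne s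
  have hc : c ∉ ({s} : Set κ) := hcs
  have hS : (Subtype.val ⁻¹' {s} : Set {j // j ≠ c}) = {⟨s, hcs.symm⟩} := by
    ext; simp [Subtype.ext_iff]
  refine dualFeasible_of_elim A B c hc (hS ▸ ih {j // j ≠ c}
    (Fintype.card_subtype_lt (p := (· ≠ c)) (not_not.2 rfl)) _ _ _ _ ?_)
  rw [← hS]
  exact fun h' => h (primalFeasible_of_elim A B c hc h')

theorem xor_primalFeasible_dualFeasible [Fintype ι] [Fintype κ] (A B : ι → κ → ℝ∞)
    (S : Set κ) : Xor (PrimalFeasible A B S) (DualFeasible A B S) := by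
  rw [xor_iff_iff_not]
  refine ⟨fun hP hD => not_primalFeasible_and_dualFeasible A B S ⟨hP, hD⟩, fun hD => ?_⟩
  refine primalFeasible_of_forall_singleton fun s hs => ?_
  by_contra hP
  obtain ⟨y, hy, j, rfl, hj⟩ := dualFeasible_of_not_primalFeasible_singleton hP
  exact hD ⟨y, hy, j, hs, hj⟩

end MinPlus

lemma ltVec_iff {m : ℕ} (u v : Fin m → WithTop ℝ) : ltVec u v ↔ ∀ i, v i ≠ ⊤ → u i < v i := by
  refine forall_congr' fun i => ?_
  rcases eq_or_ne (v i) ⊤ with hv | hv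
  · simp [hv, eq_or_ne (u i) ⊤, lt_top_iff_ne_top]
  · simp [hv]

theorem minplus_linear_duality_forall_general (m n : ℕ)
    (A B : Fin m → Fin n → WithTop ℝ) (S : Set (Fin n)) :
    Xor'
      (∃ x : Fin n → WithTop ℝ,
        (∀ i : Fin m, minPlusMul A x i ≤ minPlusMul B x i) ∧ ∀ i ∈ S, x i ≠ ⊤)
      (∃ y : Fin m → WithTop ℝ,
        ltVec (minPlusMul (fun j i => B i j) y) (minPlusMul (fun j i => A i j) y) ∧
        ∃ i ∈ S, minPlusMul (fun j i => B i j) y i ≠ ⊤) := by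
  simp only [ltVec_iff]
  exact MinPlus.xor_primalFeasible_dualFeasible A B S

/-- **Min-plus linear duality (first form)** : for matrices `A, B` over `ℝ∞` and a subset
`S` of columns, exactly one of the following holds: (1) there is a solution of
`A ⊙ x ≤ B ⊙ x` with `x_i` finite for every `i ∈ S`; (2) there is a solution of
`Bᵀ ⊙ y < Aᵀ ⊙ y` such that the `i`-th coordinate of `Bᵀ ⊙ y` is finite for some
`i ∈ S`. -/
theorem minplus_linear_duality_forall (m n : ℕ) (hm : 0 < m) (hn : 0 < n)
    (A B : Fin m → Fin n → WithTop ℝ) (S : Set (Fin n)) :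
    Xor'
      (∃ x : Fin n → WithTop ℝ,
        (∀ i : Fin m, minPlusMul A x i ≤ minPlusMul B x i) ∧ ∀ i ∈ S, x i ≠ ⊤)
      (∃ y : Fin m → WithTop ℝ,
        ltVec (minPlusMul (fun j i => B i j) y) (minPlusMul (fun j i => A i j) y) ∧
        ∃ i ∈ S, minPlusMul (fun j i => B i j) y i ≠ ⊤) :=
  minplus_linear_duality_forall_general m n A B S
end

section
/- Let m, n ≥ 1, let A, B be m×n matrices with entries in ℝ∞ = ℝ ∪ {+∞}, and let S ⊆ {1, …, n}. Then exactly one of the following two statements holds: (1) there exists x ∈ ℝ∞^n with A ⊙ x ≤ B ⊙ x such that x_i is finite for some i ∈ S; (2) there exists y ∈ ℝ∞^m with B^T ⊙ y < A^T ⊙ y such that the i-th coordinate of B^T ⊙ y is finite for every i ∈ S. -/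
/-!
Two witnesses for the same column cannot coexist, since `y ⊙ A ⊙ x ≤ y ⊙ B ⊙ x < y ⊙ A ⊙ x` as
soon as this common value is finite; and strict dual solutions are closed under pointwise minimum,
so it suffices to settle one column `k₀` at a time.

For one column this is the determinacy of a mean-payoff game, handled through energy games. From a
column `k` the opponent picks a row `i` with `B i k` finite and the solver answers with a column `j`
with `A i j` finite, consuming `A i j - B i k`; finite energy values are potentials of a solution
on their support. The rows all of whose answers need unbounded energy carry a second energy game,
played by the dual side with margin `ε`: its finite values form a strict dual solution, and where
they are infinite its potentials, glued to the primal values, solve `A ⊙ x ≤ B ⊙ x + ε`. So for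
each `ε > 0` either `k₀` has a dual witness or `A ⊙ x ≤ B ⊙ x + ε` has a solution finite at `k₀`.
If the latter holds for every `ε`, some support and some choice of minimising columns recur as
`ε → 0`; for them the relaxed systems are one system of difference constraints, and Fourier–Motzkin
elimination shows that such a system, feasible with every positive slack, is feasible without
slack.
-/

open Finset Filter
open scoped ENNReal

noncomputable section

lemma WithTop.coe_untopD_of_ne_top {α : Type*} {a : WithTop α} (d : α) (h : a ≠ ⊤) :
    ((a.untopD d : α) : WithTop α) = a := by
  lift a to α using h
  rfl

lemma WithTop.finsetInf_add {α ι : Type*} [LinearOrder α] [Add α] [AddRightMono α]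
    (s : Finset ι) (f : ι → WithTop α) (a : WithTop α) : s.inf f + a = s.inf (f · + a) :=
  apply_inf_eq_inf_comp (· + a) (fun _ _ => (min_add_add_right _ _ _).symm) (top_add a)

lemma WithTop.add_finsetInf {α ι : Type*} [LinearOrder α] [Add α] [AddLeftMono α]
    (s : Finset ι) (f : ι → WithTop α) (a : WithTop α) : a + s.inf f = s.inf (a + f ·) :=
  apply_inf_eq_inf_comp (a + ·) (fun _ _ => (min_add_add_left _ _ _).symm) (add_top a)

lemma Finset.exists_between_of_forall_le {α : Type*} [LinearOrder α] [Nonempty α]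
    (L U : Finset α) (h : ∀ l ∈ L, ∀ u ∈ U, l ≤ u) :
    ∃ z, (∀ l ∈ L, l ≤ z) ∧ ∀ u ∈ U, z ≤ u := by
  rcases U.eq_empty_or_nonempty with rfl | hU
  · obtain ⟨z, hz⟩ := L.bddAbove
    exact ⟨z, fun l hl => hz hl, by simp⟩
  · exact ⟨U.min' hU, fun l hl => le_min' _ _ _ (h l hl), fun u hu => min'_le _ _ hu⟩

lemma nonneg_of_forall_pos_nonneg_add_mul {a : ℝ} {k : ℕ} (h : ∀ ε > 0, 0 ≤ a + k * ε) :
    0 ≤ a := by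
  by_contra! ha
  have hε : 0 < -a / (k + 1) := div_pos (neg_pos.mpr ha) k.cast_add_one_pos
  have hsplit : (k : ℝ) * (-a / (k + 1)) = -a - -a / (k + 1) := by
    field_simp
    ring
  linarith [h _ hε]

def clampAdd (x : ℝ≥0∞) (w : ℝ) : ℝ≥0∞ :=
  if x = ⊤ then ⊤ else ENNReal.ofReal (x.toReal + w)

@[simp] lemma clampAdd_top (w : ℝ) : clampAdd ⊤ w = ⊤ := if_pos rfl

lemma clampAdd_of_ne_top {x : ℝ≥0∞} (hx : x ≠ ⊤) (w : ℝ) :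
    clampAdd x w = ENNReal.ofReal (x.toReal + w) := if_neg hx

lemma clampAdd_ne_top {x : ℝ≥0∞} (hx : x ≠ ⊤) (w : ℝ) : clampAdd x w ≠ ⊤ := by
  simp [clampAdd_of_ne_top hx]

lemma clampAdd_mono (w : ℝ) : Monotone (clampAdd · w) := by
  intro x y h
  dsimp only
  by_cases hy : y = ⊤
  · simp [hy]
  have hx : x ≠ ⊤ := ne_top_of_le_ne_top hy h
  rw [clampAdd_of_ne_top hx, clampAdd_of_ne_top hy]
  gcongr

lemma toReal_add_le_of_clampAdd_le {x c : ℝ≥0∞} {w : ℝ} (hc : c ≠ ⊤) (h : clampAdd x w ≤ c) :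
    x ≠ ⊤ ∧ x.toReal + w ≤ c.toReal := by
  have hx : x ≠ ⊤ := by
    rintro rfl
    exact hc (top_le_iff.mp (by simpa using h))
  rw [clampAdd_of_ne_top hx] at h
  exact ⟨hx, ENNReal.ofReal_le_iff_le_toReal hc |>.mp h⟩

structure EnergyGame (α β : Type*) where
  moves : α → Finset β
  replies : β → Finset α
  moveCost : α → β → ℝ
  replyCost : β → α → ℝ

namespace EnergyGame

variable {α β : Type*} (G : EnergyGame α β)

/-- `iter t p` is the least initial energy with which the replying player keeps a nonnegative
energy for `t` rounds from `p`, a round `p → q → r` consuming `moveCost p q + replyCost q r`. -/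
def iter : ℕ → α → ℝ≥0∞
  | 0 => fun _ => 0
  | t + 1 => fun p => (G.moves p).sup fun q => (G.replies q).inf fun r =>
      clampAdd (iter t r) (G.moveCost p q + G.replyCost q r)

def value (p : α) : ℝ≥0∞ := ⨆ t, G.iter t p

def IsWinningMove (q : β) : Prop := ∀ r ∈ G.replies q, G.value r = ⊤

lemma iter_succ (t : ℕ) (p : α) : G.iter (t + 1) p = (G.moves p).sup fun q =>
    (G.replies q).inf fun r => clampAdd (G.iter t r) (G.moveCost p q + G.replyCost q r) := rfl

lemma iter_mono (p : α) : Monotone (G.iter · p) := by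
  suffices h : ∀ t p, G.iter t p ≤ G.iter (t + 1) p from monotone_nat_of_le_succ (h · p)
  intro t
  induction t with
  | zero => exact fun _ => zero_le
  | succ t ih =>
    exact fun p => sup_mono_fun fun q _ => inf_mono_fun fun r _ => clampAdd_mono _ (ih r)

lemma iter_le_value (t : ℕ) (p : α) : G.iter t p ≤ G.value p :=
  le_iSup (G.iter · p) t

lemma value_step {p : α} (hp : G.value p ≠ ⊤) {q : β} (hq : q ∈ G.moves p) :
    ∃ r ∈ G.replies q, G.value r ≠ ⊤ ∧
      (G.value r).toReal + (G.moveCost p q + G.replyCost q r) ≤ (G.value p).toReal := by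
  set c := fun r => G.moveCost p q + G.replyCost q r
  have hcover : ∀ t, ∃ r ∈ G.replies q, clampAdd (G.iter t r) (c r) ≤ G.value p := by
    intro t
    have h : (G.replies q).inf (fun r => clampAdd (G.iter t r) (c r)) ≤ G.value p :=
      le_trans (le_sup (f := fun q => (G.replies q).inf fun r =>
        clampAdd (G.iter t r) (G.moveCost p q + G.replyCost q r)) hq) (G.iter_le_value (t + 1) p)
    exact (Finset.inf_le_iff hp.lt_top).mp h
  -- one reply serves at all times: the iterates increase and there are finitely many replies
  obtain ⟨r, hr, hbound⟩ : ∃ r ∈ G.replies q, ∀ t, clampAdd (G.iter t r) (c r) ≤ G.value p := by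
    by_contra! hfail
    choose! t₀ ht₀ using hfail
    obtain ⟨r, hr, hle⟩ := hcover ((G.replies q).sup t₀)
    exact (ht₀ r hr).not_ge <|
      (clampAdd_mono _ (G.iter_mono r (le_sup hr))).trans hle
  have hreal t := toReal_add_le_of_clampAdd_le hp (hbound t)
  have hvalue : G.value r ≤ ENNReal.ofReal ((G.value p).toReal - c r) := iSup_le fun t => by
    rw [← ENNReal.ofReal_toReal (hreal t).1]
    exact ENNReal.ofReal_le_ofReal (by linarith [(hreal t).2])
  have hfin : G.value r ≠ ⊤ := ne_top_of_le_ne_top ENNReal.ofReal_ne_top hvalue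
  refine ⟨r, hr, hfin, ?_⟩
  have h0 : 0 ≤ (G.value p).toReal - c r := by simpa [iter] using (hreal 0).2
  linarith [(ENNReal.toReal_le_toReal hfin ENNReal.ofReal_ne_top).mpr hvalue,
    ENNReal.toReal_ofReal h0]

lemma value_ne_top_of_forall {p : α} (h : ∀ q ∈ G.moves p, ∃ r ∈ G.replies q, G.value r ≠ ⊤) :
    G.value p ≠ ⊤ := by
  have hbound : ∀ t, G.iter t p ≤ (G.moves p).sup fun q => (G.replies q).inf fun r =>
      clampAdd (G.value r) (G.moveCost p q + G.replyCost q r)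
    | 0 => zero_le
    | t + 1 => sup_mono_fun fun q _ => inf_mono_fun fun r _ =>
        clampAdd_mono _ (G.iter_le_value t r)
  refine ne_top_of_le_ne_top (lt_top_iff_ne_top.mp ?_) (iSup_le hbound)
  refine (Finset.sup_lt_iff ENNReal.zero_lt_top).mpr fun q hq => ?_
  obtain ⟨r, hr, hfin⟩ := h q hq
  exact (inf_le hr).trans_lt (clampAdd_ne_top hfin _).lt_top

lemma iter_ne_top (hreplies : ∀ p, ∀ q ∈ G.moves p, (G.replies q).Nonempty) (t : ℕ) (p : α) :
    G.iter t p ≠ ⊤ := by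
  induction t generalizing p with
  | zero => exact ENNReal.zero_ne_top
  | succ t ih =>
    refine lt_top_iff_ne_top.mp <| (Finset.sup_lt_iff ENNReal.zero_lt_top).mpr fun q hq => ?_
    obtain ⟨r, hr⟩ := hreplies p q hq
    exact (inf_le hr).trans_lt (clampAdd_ne_top (ih r) _).lt_top

lemma exists_forall_lt_iter [Finite α] {a : ℝ≥0∞} (ha : a ≠ ⊤) :
    ∃ t, ∀ p, G.value p = ⊤ → a < G.iter t p := by
  have h p : ∃ t, G.value p = ⊤ → a < G.iter t p := by
    by_cases hp : G.value p = ⊤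
    · obtain ⟨t, ht⟩ := lt_iSup_iff.mp (hp ▸ ha.lt_top : a < G.value p)
      exact ⟨t, fun _ => ht⟩
    · exact ⟨0, fun h => absurd h hp⟩
  choose t ht using h
  obtain ⟨T, hT⟩ := Finite.bddAbove_range t
  exact ⟨T, fun p hp => (ht p hp).trans_le (G.iter_mono p (hT ⟨p, rfl⟩))⟩

def minReply (t : ℕ) (q : β) : ℝ :=
  if h : (G.replies q).Nonempty then
    (G.replies q).inf' h fun r => (G.iter t r).toReal + G.replyCost q r
  else 0

lemma minReply_le {t : ℕ} {q : β} {r : α} (hr : r ∈ G.replies q) :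
    G.minReply t q ≤ (G.iter t r).toReal + G.replyCost q r := by
  simp only [minReply, dif_pos (show (G.replies q).Nonempty from ⟨r, hr⟩)]
  exact inf'_le _ hr

lemma inf_clampAdd_le_minReply {t : ℕ} (hfin : ∀ r, G.iter t r ≠ ⊤) (p : α) {q : β}
    (hq : (G.replies q).Nonempty) :
    (G.replies q).inf (fun r => clampAdd (G.iter t r) (G.moveCost p q + G.replyCost q r)) ≤
      ENNReal.ofReal (G.minReply t q + G.moveCost p q) := by
  obtain ⟨r, hr, hmin⟩ := exists_mem_eq_inf' hq fun r => (G.iter t r).toReal + G.replyCost q r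
  refine (inf_le hr).trans_eq ?_
  rw [clampAdd_of_ne_top (hfin r), minReply, dif_pos hq, hmin]
  ring_nf

lemma isWinningMove_of_lt_inf {θ : ℝ} {t : ℕ} {p : α} {q : β}
    (hθ : ∀ r, G.value r ≠ ⊤ → (G.value r).toReal + (G.moveCost p q + G.replyCost q r) ≤ θ)
    (hlt : ENNReal.ofReal θ <
      (G.replies q).inf fun r => clampAdd (G.iter t r) (G.moveCost p q + G.replyCost q r)) :
    G.IsWinningMove q := by
  intro r hr
  by_contra hfin
  have hlt := hlt.trans_le (inf_le hr)
  rw [clampAdd_of_ne_top (ne_top_of_le_ne_top hfin (G.iter_le_value t r)),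
    ENNReal.ofReal_lt_ofReal_iff'] at hlt
  linarith [hθ r hfin, ENNReal.toReal_mono hfin (G.iter_le_value t r), hlt.1]

/-- The potential is `-minReply t` for a time `t` at which every position of infinite value needs
more energy than any finite value plus any cost: a move attaining `iter (t + 1) p` at such a
position is then winning. -/
theorem exists_potential [Finite α] [Finite β]
    (hreplies : ∀ p, ∀ q ∈ G.moves p, (G.replies q).Nonempty) :
    ∃ x : β → ℝ, ∀ q, G.IsWinningMove q → ∀ p ∈ G.replies q,
      ∃ q' ∈ G.moves p, G.IsWinningMove q' ∧ x q' - G.moveCost p q' ≤ x q + G.replyCost q p := by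
  obtain ⟨θ, hθ⟩ := Finite.bddAbove_range fun prq : α × β × α =>
    (G.value prq.2.2).toReal + (G.moveCost prq.1 prq.2.1 + G.replyCost prq.2.1 prq.2.2)
  obtain ⟨t, ht⟩ := G.exists_forall_lt_iter (ENNReal.ofReal_ne_top (r := max θ 0))
  refine ⟨fun q => -G.minReply t q, fun q hq p hp => ?_⟩
  have hlarge : ENNReal.ofReal (max θ 0) < G.iter (t + 1) p :=
    (ht p (hq p hp)).trans_le (G.iter_mono p t.le_succ)
  have hmoves : (G.moves p).Nonempty := by
    by_contra hempty
    simp [iter_succ, not_nonempty_iff_eq_empty.mp hempty] at hlarge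
  obtain ⟨q', hq', hsup⟩ := exists_mem_eq_sup _ hmoves fun q =>
    (G.replies q).inf fun r => clampAdd (G.iter t r) (G.moveCost p q + G.replyCost q r)
  rw [← iter_succ] at hsup
  have hwin : G.IsWinningMove q' := G.isWinningMove_of_lt_inf
    (fun r _ => (hθ ⟨(p, q', r), rfl⟩).trans (le_max_left θ 0)) (hsup ▸ hlarge)
  have hz := hsup ▸ G.inf_clampAdd_le_minReply (G.iter_ne_top hreplies t) p (hreplies p q' hq')
  have hz0 : 0 ≤ G.minReply t q' + G.moveCost p q' :=
    (le_max_right θ 0).trans (ENNReal.ofReal_lt_ofReal_iff'.mp (hlarge.trans_le hz)).1.le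
  have hp_le : (G.iter t p).toReal ≤ G.minReply t q' + G.moveCost p q' :=
    ENNReal.toReal_le_of_le_ofReal hz0 ((G.iter_mono p t.le_succ).trans hz)
  refine ⟨q', hq', hwin, ?_⟩
  linarith [G.minReply_le (t := t) hp]

end EnergyGame

structure DiffConstraint (V : Type*) where
  src : V
  dst : V
  const : ℝ
  slack : ℕ

namespace DiffConstraint

variable {V : Type*}

def Holds (c : DiffConstraint V) (x : V → ℝ) (ε : ℝ) : Prop :=
  x c.dst ≤ x c.src + c.const + c.slack * ε

def comp (c d : DiffConstraint V) : DiffConstraint V :=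
  ⟨c.src, d.dst, c.const + d.const, c.slack + d.slack⟩

lemma Holds.comp {c d : DiffConstraint V} {x : V → ℝ} {ε : ℝ} (hc : c.Holds x ε)
    (hd : d.Holds x ε) (h : c.dst = d.src) : (c.comp d).Holds x ε := by
  simp only [Holds, DiffConstraint.comp, h] at *
  push_cast
  linarith

variable [DecidableEq V]

def eliminate (v : V) (L : List (DiffConstraint V)) : List (DiffConstraint V) :=
  L.filter (fun c => c.src ≠ v ∧ c.dst ≠ v) ++
    (L.filter fun c => c.src ≠ v ∧ c.dst = v).flatMap fun c =>
      (L.filter fun d => d.src = v ∧ d.dst ≠ v).map c.comp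

def vertices (L : List (DiffConstraint V)) : Finset V :=
  (L.map src ++ L.map dst).toFinset

lemma vertices_eliminate_subset (v : V) (L : List (DiffConstraint V)) :
    vertices (eliminate v L) ⊆ (vertices L).erase v := by
  intro u hu
  simp only [vertices, eliminate, List.toFinset_append, mem_union, List.mem_toFinset,
    List.mem_map, List.mem_append, List.mem_filter, List.mem_flatMap, mem_erase] at hu ⊢
  grind [DiffConstraint.comp]

lemma Holds.eliminate {L : List (DiffConstraint V)} {x : V → ℝ} {ε : ℝ} (v : V)
    (h : ∀ c ∈ L, c.Holds x ε) : ∀ c ∈ eliminate v L, c.Holds x ε := by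
  intro c hc
  simp only [DiffConstraint.eliminate, List.mem_append, List.mem_filter, List.mem_flatMap,
    List.mem_map, decide_eq_true_eq] at hc
  rcases hc with ⟨hc, -⟩ | ⟨c, ⟨hc, -, hcv⟩, d, ⟨hd, hdv, -⟩, rfl⟩
  · exact h c hc
  · exact (h c hc).comp (h d hd) (hcv.trans hdv.symm)

lemma exists_holds_of_eliminate {L : List (DiffConstraint V)} {x : V → ℝ} {ε : ℝ} (v : V)
    (hloop : ∀ c ∈ L, c.src = v → c.dst = v → 0 ≤ c.const + c.slack * ε)
    (h : ∀ c ∈ eliminate v L, c.Holds x ε) : ∃ x' : V → ℝ, ∀ c ∈ L, c.Holds x' ε := by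
  -- constraints out of `v` bound `x' v` below, those into `v` bound it above, and the composites
  -- in `eliminate v L` say that every lower bound is below every upper bound
  let lower := ((L.filter fun d => d.src = v ∧ d.dst ≠ v).map
    fun d => x d.dst - d.const - d.slack * ε).toFinset
  let upper := ((L.filter fun c => c.src ≠ v ∧ c.dst = v).map
    fun c => x c.src + c.const + c.slack * ε).toFinset
  obtain ⟨z, hlower, hupper⟩ := exists_between_of_forall_le lower upper <| by
    simp only [lower, upper, List.mem_toFinset, List.mem_map, List.mem_filter,
      decide_eq_true_eq]
    rintro _ ⟨d, ⟨hd, hdv, hdv'⟩, rfl⟩ _ ⟨c, ⟨hc, hcv', hcv⟩, rfl⟩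
    have := h (c.comp d) <| by
      simp only [eliminate, List.mem_append, List.mem_flatMap, List.mem_map, List.mem_filter,
        decide_eq_true_eq]
      exact Or.inr ⟨c, ⟨hc, hcv', hcv⟩, d, ⟨hd, hdv, hdv'⟩, rfl⟩
    simp only [Holds, comp] at this
    push_cast at this
    linarith
  refine ⟨Function.update x v z, fun c hc => ?_⟩
  simp only [Holds]
  by_cases hs : c.src = v <;> by_cases hd : c.dst = v
  · simp only [hs, hd, Function.update_self]
    linarith [hloop c hc hs hd]
  · have := hlower _ (List.mem_toFinset.mpr (List.mem_map.mpr ⟨c, List.mem_filter.mpr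
      ⟨hc, by simp [hs, hd]⟩, rfl⟩))
    rw [hs, Function.update_self, Function.update_of_ne hd]
    linarith
  · have := hupper _ (List.mem_toFinset.mpr (List.mem_map.mpr ⟨c, List.mem_filter.mpr
      ⟨hc, by simp [hs, hd]⟩, rfl⟩))
    rw [hd, Function.update_self, Function.update_of_ne hs]
    linarith
  · rw [Function.update_of_ne hs, Function.update_of_ne hd]
    exact h c (List.mem_append_left _ (List.mem_filter.mpr ⟨hc, by simp [hs, hd]⟩))

theorem exists_holds_zero_of_forall_pos (L : List (DiffConstraint V))
    (h : ∀ ε > 0, ∃ x : V → ℝ, ∀ c ∈ L, c.Holds x ε) : ∃ x : V → ℝ, ∀ c ∈ L, c.Holds x 0 := by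
  induction hN : (vertices L).card using Nat.strong_induction_on generalizing L with
  | _ N ih =>
  rcases L with _ | ⟨c₀, L'⟩
  · exact ⟨0, by simp⟩
  set v := c₀.src
  have hv : v ∈ vertices (c₀ :: L') := by simp [vertices, v]
  have hloop : ∀ c ∈ c₀ :: L', c.src = v → c.dst = v → 0 ≤ c.const + c.slack * 0 := by
    intro c hc hs hd
    rw [mul_zero, add_zero]
    refine nonneg_of_forall_pos_nonneg_add_mul (k := c.slack) fun ε hε => ?_
    obtain ⟨x, hx⟩ := h ε hε
    have := hx c hc
    simp only [Holds, hs, hd] at this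
    linarith
  have hcard : (vertices (eliminate v (c₀ :: L'))).card < N :=
    hN ▸ (card_le_card (vertices_eliminate_subset v _)).trans_lt (card_erase_lt_of_mem hv)
  obtain ⟨x, hx⟩ := ih _ hcard _ (fun ε hε => (h ε hε).imp fun x hx => Holds.eliminate v hx) rfl
  exact exists_holds_of_eliminate v hloop hx

end DiffConstraint

section MinPlus

variable {m n : ℕ}

lemma minPlusMul_mono (C : Fin m → Fin n → WithTop ℝ) : Monotone (minPlusMul C) :=
  fun _ _ h _ => inf_mono_fun fun j _ => add_le_add le_rfl (h j)

lemma minPlusMul_top (C : Fin m → Fin n → WithTop ℝ) : minPlusMul C ⊤ = ⊤ := by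
  funext i
  simp [minPlusMul]

lemma minPlusMul_inf (C : Fin m → Fin n → WithTop ℝ) (x y : Fin n → WithTop ℝ) :
    minPlusMul C (x ⊓ y) = minPlusMul C x ⊓ minPlusMul C y := by
  funext i
  simp only [minPlusMul, Pi.inf_apply, ← inf_inf]
  exact inf_congr rfl fun j _ => (min_add_add_left _ _ _).symm

lemma minPlusMul_swap_assoc (C : Fin m → Fin n → WithTop ℝ) (y : Fin m → WithTop ℝ)
    (x : Fin n → WithTop ℝ) :
    univ.inf (fun j => minPlusMul (Function.swap C) y j + x j) =
      univ.inf (fun i => y i + minPlusMul C x i) := by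
  simp only [minPlusMul, Function.swap, WithTop.finsetInf_add, WithTop.add_finsetInf, add_assoc]
  rw [Finset.inf_comm]
  exact inf_congr rfl fun i _ => inf_congr rfl fun j _ => add_left_comm _ _ _

lemma ltVec_inf {u v u' v' : Fin m → WithTop ℝ} (h : ltVec u v) (h' : ltVec u' v') :
    ltVec (u ⊓ u') (v ⊓ v') := by
  intro i
  simp only [Pi.inf_apply]
  rcases h i with ⟨hu, hv⟩ | hlt <;> rcases h' i with ⟨hu', hv'⟩ | hlt'
  · simp [hu, hv, hu', hv']
  · exact Or.inr (by simpa [hu, hv] using hlt')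
  · exact Or.inr (by simpa [hu', hv'] using hlt)
  · exact Or.inr (min_lt_min hlt hlt')

theorem not_solution_and_dual {A B : Fin m → Fin n → WithTop ℝ} {x : Fin n → WithTop ℝ}
    {y : Fin m → WithTop ℝ} (hx : ∀ i, minPlusMul A x i ≤ minPlusMul B x i)
    (hy : ltVec (minPlusMul (Function.swap B) y) (minPlusMul (Function.swap A) y)) {k : Fin n}
    (hxk : x k ≠ ⊤) (hyk : minPlusMul (Function.swap B) y k ≠ ⊤) : False := by
  have hA := minPlusMul_swap_assoc A y x
  have hB := minPlusMul_swap_assoc B y x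
  set c := univ.inf fun j => minPlusMul (Function.swap B) y j + x j
  have hc : c < ⊤ :=
    (inf_le (mem_univ k)).trans_lt (WithTop.add_ne_top.mpr ⟨hyk, hxk⟩).lt_top
  have hle : univ.inf (fun j => minPlusMul (Function.swap A) y j + x j) ≤ c := by
    rw [hA, hB]
    exact inf_mono_fun fun i _ => add_le_add le_rfl (hx i)
  refine hle.not_gt ((Finset.lt_inf_iff hc).mpr fun j _ => ?_)
  by_cases hfin : minPlusMul (Function.swap A) y j + x j = ⊤
  · exact hfin ▸ hc
  obtain ⟨hAj, hxj⟩ := WithTop.add_ne_top.mp hfin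
  have hlt : minPlusMul (Function.swap B) y j < minPlusMul (Function.swap A) y j :=
    (hy j).resolve_left fun h => hAj h.2
  exact (inf_le (mem_univ j)).trans_lt (WithTop.add_lt_add_right hxj hlt)

theorem exists_dual_of_forall_mem {A B : Fin m → Fin n → WithTop ℝ} (s : Finset (Fin n))
    (h : ∀ k ∈ s, ∃ y : Fin m → WithTop ℝ,
      ltVec (minPlusMul (Function.swap B) y) (minPlusMul (Function.swap A) y) ∧
        minPlusMul (Function.swap B) y k ≠ ⊤) :
    ∃ y : Fin m → WithTop ℝ,
      ltVec (minPlusMul (Function.swap B) y) (minPlusMul (Function.swap A) y) ∧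
        ∀ k ∈ s, minPlusMul (Function.swap B) y k ≠ ⊤ := by
  choose! y hy hyk using h
  refine ⟨s.inf y, ?_, fun k hk => ne_top_of_le_ne_top (hyk k hk)
    (minPlusMul_mono _ (inf_le hk) k)⟩
  refine inf_induction (p := fun y => ltVec (minPlusMul (Function.swap B) y)
    (minPlusMul (Function.swap A) y)) ?_ (fun y₁ h₁ y₂ h₂ => ?_) hy
  · simp [minPlusMul_top, ltVec]
  · rw [minPlusMul_inf, minPlusMul_inf]
    exact ltVec_inf h₁ h₂

end MinPlus

section Relaxed

variable {m n : ℕ} {A B : Fin m → Fin n → WithTop ℝ}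

lemma add_coe_le_add_coe_add_of_untopD {a b : WithTop ℝ} (ha : a ≠ ⊤) (hb : b ≠ ⊤) {x y δ : ℝ}
    (h : a.untopD 0 + x ≤ b.untopD 0 + y + δ) : a + x ≤ b + y + δ := by
  rw [← WithTop.coe_untopD_of_ne_top 0 ha, ← WithTop.coe_untopD_of_ne_top 0 hb]
  exact_mod_cast h

lemma minPlusMul_le_add_of_forall {X : Fin n → WithTop ℝ} {i : Fin m} {δ : ℝ}
    (h : ∀ k, B i k ≠ ⊤ → X k ≠ ⊤ → ∃ j, A i j + X j ≤ B i k + X k + δ) :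
    minPlusMul A X i ≤ minPlusMul B X i + δ := by
  simp only [minPlusMul, WithTop.finsetInf_add]
  refine Finset.le_inf fun k _ => ?_
  by_cases hB : B i k = ⊤
  · simp [hB]
  by_cases hX : X k = ⊤
  · simp [hX]
  obtain ⟨j, hj⟩ := h k hB hX
  exact (inf_le (mem_univ j)).trans hj

lemma untopD_add_le_of_minPlusMul_le_add {X : Fin n → WithTop ℝ} {i : Fin m} {j k : Fin n}
    {δ : ℝ} (hX : minPlusMul A X i ≤ minPlusMul B X i + δ)
    (hj : minPlusMul A X i = A i j + X j) (hB : B i k ≠ ⊤) (hk : X k ≠ ⊤) :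
    A i j ≠ ⊤ ∧ X j ≠ ⊤ ∧
      (A i j).untopD 0 + (X j).untopD 0 ≤ (B i k).untopD 0 + (X k).untopD 0 + δ := by
  have hle : A i j + X j ≤ B i k + X k + δ :=
    hj ▸ hX.trans (add_le_add (inf_le (mem_univ k)) le_rfl)
  lift B i k to ℝ using hB with b
  lift X k to ℝ using hk with xk
  obtain ⟨hA, hXj⟩ := WithTop.add_ne_top.mp (ne_top_of_le_ne_top (by simp [← WithTop.coe_add]) hle)
  lift A i j to ℝ using hA with a
  lift X j to ℝ using hXj with xj
  exact ⟨WithTop.coe_ne_top, WithTop.coe_ne_top, by simpa using (by exact_mod_cast hle : _)⟩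

/-- For a support `T` and a choice `τ i` of minimising column in every row, the relaxed
inequalities become the difference constraints `x (τ i) ≤ x k + (B i k - A i (τ i)) + ε`. -/
def strategyConstraints (A B : Fin m → Fin n → WithTop ℝ) (T : Finset (Fin n))
    (τ : Fin m → Fin n) : List (DiffConstraint (Fin n)) :=
  ((univ ×ˢ T).filter fun ik => B ik.1 ik.2 ≠ ⊤).toList.map fun ik =>
    ⟨ik.2, τ ik.1, (B ik.1 ik.2).untopD 0 - (A ik.1 (τ ik.1)).untopD 0, 1⟩

lemma mem_strategyConstraints {T : Finset (Fin n)} {τ : Fin m → Fin n}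
    {c : DiffConstraint (Fin n)} :
    c ∈ strategyConstraints A B T τ ↔ ∃ i k, k ∈ T ∧ B i k ≠ ⊤ ∧
      c = ⟨k, τ i, (B i k).untopD 0 - (A i (τ i)).untopD 0, 1⟩ := by
  simp only [strategyConstraints, List.mem_map, mem_toList, mem_filter, mem_product, mem_univ,
    true_and, Prod.exists]
  exact ⟨fun ⟨i, k, ⟨hk, hB⟩, hc⟩ => ⟨i, k, hk, hB, hc.symm⟩,
    fun ⟨i, k, hk, hB, hc⟩ => ⟨i, k, ⟨hk, hB⟩, hc.symm⟩⟩

section Strategy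

variable {X : Fin n → WithTop ℝ} {δ : ℝ} {τ : Fin m → Fin n}

lemma holds_strategyConstraints (hX : ∀ i, minPlusMul A X i ≤ minPlusMul B X i + δ)
    (hτ : ∀ i, minPlusMul A X i = A i (τ i) + X (τ i)) {ε : ℝ} (hδε : δ ≤ ε) :
    ∀ c ∈ strategyConstraints A B (univ.filter (X · ≠ ⊤)) τ,
      c.Holds (fun k => (X k).untopD 0) ε := by
  intro c hc
  obtain ⟨i, k, hk, hB, rfl⟩ := mem_strategyConstraints.mp hc
  obtain ⟨-, -, hreal⟩ := untopD_add_le_of_minPlusMul_le_add (hX i) (hτ i) hB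
    (mem_filter.mp hk).2
  simp only [DiffConstraint.Holds, Nat.cast_one, one_mul]
  linarith

lemma solution_of_holds_strategyConstraints
    (hX : ∀ i, minPlusMul A X i ≤ minPlusMul B X i + δ)
    (hτ : ∀ i, minPlusMul A X i = A i (τ i) + X (τ i)) {x : Fin n → ℝ}
    (hx : ∀ c ∈ strategyConstraints A B (univ.filter (X · ≠ ⊤)) τ, c.Holds x 0) (i : Fin m) :
    minPlusMul A (fun k => if X k ≠ ⊤ then (x k : WithTop ℝ) else ⊤) i ≤
      minPlusMul B (fun k => if X k ≠ ⊤ then (x k : WithTop ℝ) else ⊤) i := by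
  set Y : Fin n → WithTop ℝ := fun k => if X k ≠ ⊤ then (x k : WithTop ℝ) else ⊤
  suffices h : minPlusMul A Y i ≤ minPlusMul B Y i + ((0 : ℝ) : WithTop ℝ) by simpa using h
  refine minPlusMul_le_add_of_forall fun k hB hk => ⟨τ i, ?_⟩
  have hXk : X k ≠ ⊤ := by
    by_contra hXk
    simp [Y, hXk] at hk
  obtain ⟨hA, hXτ, -⟩ := untopD_add_le_of_minPlusMul_le_add (hX i) (hτ i) hB hXk
  have hc := hx _ (mem_strategyConstraints.mpr ⟨i, k, by simpa using hXk, hB, rfl⟩)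
  simp only [DiffConstraint.Holds, Nat.cast_one, mul_zero, add_zero] at hc
  simp only [Y, if_pos hXk, if_pos hXτ]
  exact add_coe_le_add_coe_add_of_untopD hA hB (by linarith)

end Strategy

theorem exists_solution_of_forall_relaxed {k₀ : Fin n}
    (h : ∀ ε > (0 : ℝ), ∃ X : Fin n → WithTop ℝ,
      (∀ i, minPlusMul A X i ≤ minPlusMul B X i + ε) ∧ X k₀ ≠ ⊤) :
    ∃ X : Fin n → WithTop ℝ, (∀ i, minPlusMul A X i ≤ minPlusMul B X i) ∧ X k₀ ≠ ⊤ := by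
  choose X hX hXk₀ using fun t : ℕ => h (1 / (t + 1)) Nat.one_div_pos_of_nat
  choose σ hσ using fun t i => (exists_mem_eq_inf univ ⟨k₀, mem_univ _⟩
    fun j => A i j + X t j).imp fun _ hj => hj.2
  obtain ⟨⟨T, τ⟩, hτ⟩ := Finite.exists_infinite_fiber fun t => (univ.filter (X t · ≠ ⊤), σ t)
  have hfreq : ∃ᶠ t in atTop, univ.filter (X t · ≠ ⊤) = T ∧ σ t = τ :=
    Nat.frequently_atTop_iff_infinite.mpr <|
      (Set.infinite_coe_iff.mp hτ).mono fun t ht => by simpa [Prod.ext_iff] using ht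
  have hfeas : ∀ ε > 0, ∃ x : Fin n → ℝ, ∀ c ∈ strategyConstraints A B T τ, c.Holds x ε := by
    intro ε hε
    obtain ⟨t, ⟨rfl, rfl⟩, hsmall⟩ := (hfreq.and_eventually
      (tendsto_one_div_add_atTop_nhds_zero_nat.eventually (gt_mem_nhds hε))).exists
    exact ⟨_, holds_strategyConstraints (hX t) (hσ t) hsmall.le⟩
  obtain ⟨x, hx⟩ := DiffConstraint.exists_holds_zero_of_forall_pos _ hfeas
  obtain ⟨t, rfl, rfl⟩ := hfreq.exists
  exact ⟨_, solution_of_holds_strategyConstraints (hX t) (hσ t) hx, by simp [hXk₀ t]⟩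

end Relaxed

section Games

variable {m n : ℕ}

@[simps]
def primalGame (A B : Fin m → Fin n → WithTop ℝ) : EnergyGame (Fin n) (Fin m) where
  moves k := univ.filter (B · k ≠ ⊤)
  replies i := univ.filter (A i · ≠ ⊤)
  moveCost k i := -(B i k).untopD 0
  replyCost i j := (A i j).untopD 0

def trappedRows (A B : Fin m → Fin n → WithTop ℝ) : Finset (Fin m) :=
  univ.filter fun i => ∀ j, A i j ≠ ⊤ → (primalGame A B).value j = ⊤

@[simps]
def dualGame (A B : Fin m → Fin n → WithTop ℝ) (ε : ℝ) (U : Finset (Fin m)) :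
    EnergyGame (Fin m) (Fin n) where
  moves i := univ.filter fun j => i ∈ U ∧ A i j ≠ ⊤
  replies j := univ.filter fun i => i ∈ U ∧ B i j ≠ ⊤
  moveCost i j := ε - (A i j).untopD 0
  replyCost j i := (B i j).untopD 0

variable {A B : Fin m → Fin n → WithTop ℝ}

lemma exists_mem_trappedRows {k : Fin n} (hk : (primalGame A B).value k = ⊤) :
    ∃ i ∈ trappedRows A B, B i k ≠ ⊤ := by
  by_contra! h
  refine (primalGame A B).value_ne_top_of_forall (fun i hi => ?_) hk
  have hi : B i k ≠ ⊤ := by simpa using hi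
  have hnot : i ∉ trappedRows A B := fun hmem => hi (h i hmem)
  simpa [trappedRows] using hnot

lemma dualGame_replies_nonempty (ε : ℝ) (i : Fin m) :
    ∀ j ∈ (dualGame A B ε (trappedRows A B)).moves i,
      ((dualGame A B ε (trappedRows A B)).replies j).Nonempty := by
  intro j hj
  simp only [dualGame_moves, mem_filter, mem_univ, true_and] at hj
  obtain ⟨i', hi', hB⟩ := exists_mem_trappedRows ((mem_filter.mp hj.1).2 j hj.2)
  exact ⟨i', by simp [hi', hB]⟩

lemma primalGame_value_step {k : Fin n} {i : Fin m} (hk : (primalGame A B).value k ≠ ⊤)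
    (hB : B i k ≠ ⊤) : ∃ j, A i j ≠ ⊤ ∧ (primalGame A B).value j ≠ ⊤ ∧
      ((primalGame A B).value j).toReal + (A i j).untopD 0 ≤
        ((primalGame A B).value k).toReal + (B i k).untopD 0 := by
  obtain ⟨j, hj, hfin, hstep⟩ := (primalGame A B).value_step hk (q := i) (by simpa using hB)
  simp only [primalGame_replies, mem_filter, mem_univ, true_and, primalGame_moveCost,
    primalGame_replyCost] at hj hstep
  exact ⟨j, hj, hfin, by linarith⟩

lemma dualGame_value_step {ε : ℝ} {U : Finset (Fin m)} {i : Fin m} {j : Fin n} (hi : i ∈ U)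
    (hA : A i j ≠ ⊤) (hfin : (dualGame A B ε U).value i ≠ ⊤) :
    ∃ i', i' ∈ U ∧ B i' j ≠ ⊤ ∧ (dualGame A B ε U).value i' ≠ ⊤ ∧
      ((dualGame A B ε U).value i').toReal + (B i' j).untopD 0 + ε ≤
        ((dualGame A B ε U).value i).toReal + (A i j).untopD 0 := by
  obtain ⟨i', hi', hfin', hstep⟩ := (dualGame A B ε U).value_step hfin (q := j)
    (by simp [hi, hA])
  simp only [dualGame_replies, mem_filter, mem_univ, true_and, dualGame_moveCost,
    dualGame_replyCost] at hi' hstep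
  exact ⟨i', hi'.1, hi'.2, hfin', by linarith⟩

lemma exists_dualGame_potential (ε : ℝ) :
    ∃ x : Fin n → ℝ, ∀ k, (dualGame A B ε (trappedRows A B)).IsWinningMove k →
      ∀ i ∈ trappedRows A B, B i k ≠ ⊤ → ∃ j, A i j ≠ ⊤ ∧
        (dualGame A B ε (trappedRows A B)).IsWinningMove j ∧
          x j + (A i j).untopD 0 ≤ x k + (B i k).untopD 0 + ε := by
  obtain ⟨x, hx⟩ := (dualGame A B ε (trappedRows A B)).exists_potential
    (dualGame_replies_nonempty ε)
  refine ⟨x, fun k hk i hi hB => ?_⟩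
  obtain ⟨j, hj, hjwin, hpot⟩ := hx k hk i (by simp [hi, hB])
  simp only [dualGame_moves, mem_filter, mem_univ, true_and, dualGame_moveCost,
    dualGame_replyCost] at hj hpot
  exact ⟨j, hj.2, hjwin, by linarith⟩

theorem exists_dual_of_dualGame {ε : ℝ} (hε : 0 < ε) (U : Finset (Fin m)) :
    ∃ y : Fin m → WithTop ℝ,
      ltVec (minPlusMul (Function.swap B) y) (minPlusMul (Function.swap A) y) ∧
      ∀ k, ∀ i ∈ (dualGame A B ε U).replies k, (dualGame A B ε U).value i ≠ ⊤ →
        minPlusMul (Function.swap B) y k ≠ ⊤ := by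
  set G := dualGame A B ε U
  let y : Fin m → WithTop ℝ := fun i =>
    if i ∈ U ∧ G.value i ≠ ⊤ then ((G.value i).toReal : WithTop ℝ) else ⊤
  refine ⟨y, fun j => ?_, fun k i hi hfin => ?_⟩
  · by_cases htop : minPlusMul (Function.swap A) y j = ⊤
    · by_cases hB : minPlusMul (Function.swap B) y j = ⊤
      · exact Or.inl ⟨hB, htop⟩
      · exact Or.inr (htop ▸ lt_top_iff_ne_top.mpr hB)
    have hrows : (univ : Finset (Fin m)).Nonempty := by
      by_contra hempty
      simp [minPlusMul, not_nonempty_iff_eq_empty.mp hempty] at htop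
    obtain ⟨i, -, hi⟩ := exists_mem_eq_inf univ hrows fun i => A i j + y i
    change minPlusMul (Function.swap A) y j = A i j + y i at hi
    obtain ⟨hA, hy⟩ := WithTop.add_ne_top.mp (hi ▸ htop)
    have hiU : i ∈ U ∧ G.value i ≠ ⊤ := by
      by_contra hiU
      simp [y, hiU] at hy
    obtain ⟨i', hi'U, hB, hfin', hstep⟩ := dualGame_value_step hiU.1 hA hiU.2
    right
    calc minPlusMul (Function.swap B) y j ≤ B i' j + y i' := inf_le (mem_univ i')
      _ < A i j + y i := by
        simp only [y, if_pos hiU, if_pos (show i' ∈ U ∧ G.value i' ≠ ⊤ from ⟨hi'U, hfin'⟩)]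
        rw [← WithTop.coe_untopD_of_ne_top 0 hA, ← WithTop.coe_untopD_of_ne_top 0 hB]
        exact_mod_cast (by linarith : _ < _)
      _ = _ := hi.symm
  · simp only [G, dualGame_replies, mem_filter, mem_univ, true_and] at hi
    refine ne_top_of_le_ne_top ?_ (inf_le (mem_univ i))
    simp [y, hi.1, hfin, hi.2]

theorem exists_relaxed_of_dualGame {ε : ℝ} (hε : 0 ≤ ε) :
    ∃ X : Fin n → WithTop ℝ, (∀ i, minPlusMul A X i ≤ minPlusMul B X i + ε) ∧
      ∀ k, (dualGame A B ε (trappedRows A B)).IsWinningMove k → X k ≠ ⊤ := by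
  classical
  set μ := (primalGame A B).value
  set G := dualGame A B ε (trappedRows A B)
  obtain ⟨xw, hxw⟩ := exists_dualGame_potential (A := A) (B := B) ε
  obtain ⟨C, hC⟩ := Finite.bddAbove_range fun ijk : Fin m × Fin n × Fin n =>
    (μ ijk.2.1).toReal + (A ijk.1 ijk.2.1).untopD 0 - (B ijk.1 ijk.2.2).untopD 0 - xw ijk.2.2
  let X : Fin n → WithTop ℝ := fun k =>
    if μ k = ⊤ then (if G.IsWinningMove k then (xw k : WithTop ℝ) else ⊤)
    else ((μ k).toReal - C : ℝ)
  refine ⟨X, fun i => minPlusMul_le_add_of_forall fun k hB hk => ?_, fun k hk => ?_⟩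
  · by_cases hμk : μ k = ⊤
    · have hwin : G.IsWinningMove k := by
        by_contra hwin
        simp [X, hμk, hwin] at hk
      by_cases hi : i ∈ trappedRows A B
      · obtain ⟨j, hA, hjwin, hpot⟩ := hxw k hwin i hi hB
        have hμj : μ j = ⊤ := (mem_filter.mp hi).2 j hA
        refine ⟨j, ?_⟩
        simp only [X, μ, G, hμj, hμk, if_true, if_pos hwin, if_pos hjwin]
        exact add_coe_le_add_coe_add_of_untopD hA hB (by linarith)
      · -- `C` makes every answer towards a column of finite primal value affordable
        obtain ⟨j, hA, hμj⟩ : ∃ j, A i j ≠ ⊤ ∧ μ j ≠ ⊤ := by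
          simpa [trappedRows, μ] using hi
        refine ⟨j, ?_⟩
        simp only [X, hμk, if_neg hμj, if_true, if_pos hwin]
        exact add_coe_le_add_coe_add_of_untopD hA hB (by linarith [hC ⟨(i, j, k), rfl⟩])
    · obtain ⟨j, hA, hμj, hstep⟩ := primalGame_value_step hμk hB
      refine ⟨j, ?_⟩
      simp only [X, μ, if_neg hμk, if_neg hμj]
      exact add_coe_le_add_coe_add_of_untopD hA hB (by linarith)
  · by_cases hμk : μ k = ⊤ <;> simp [X, hμk, hk]

theorem solution_or_dual (k₀ : Fin n) :
    (∃ X : Fin n → WithTop ℝ, (∀ i, minPlusMul A X i ≤ minPlusMul B X i) ∧ X k₀ ≠ ⊤) ∨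
      ∃ y : Fin m → WithTop ℝ,
        ltVec (minPlusMul (Function.swap B) y) (minPlusMul (Function.swap A) y) ∧
          minPlusMul (Function.swap B) y k₀ ≠ ⊤ := by
  by_cases h : ∀ ε > (0 : ℝ), ∃ X : Fin n → WithTop ℝ,
      (∀ i, minPlusMul A X i ≤ minPlusMul B X i + ε) ∧ X k₀ ≠ ⊤
  · exact Or.inl (exists_solution_of_forall_relaxed h)
  push Not at h
  obtain ⟨ε, hε, hno⟩ := h
  obtain ⟨y, hy, hyfin⟩ := exists_dual_of_dualGame (A := A) (B := B) hε (trappedRows A B)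
  obtain ⟨X, hX, hXwin⟩ := exists_relaxed_of_dualGame (A := A) (B := B) hε.le
  obtain ⟨i, hi, hfin⟩ : ∃ i ∈ (dualGame A B ε (trappedRows A B)).replies k₀,
      (dualGame A B ε (trappedRows A B)).value i ≠ ⊤ := by
    by_contra! hwin
    exact hXwin k₀ hwin (hno X hX)
  exact Or.inr ⟨y, hy, hyfin k₀ i hi hfin⟩

end Games

end

theorem minplus_linear_duality_exists_general (m n : ℕ)
    (A B : Fin m → Fin n → WithTop ℝ) (S : Set (Fin n)) :
    Xor'
      (∃ x : Fin n → WithTop ℝ,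
        (∀ i : Fin m, minPlusMul A x i ≤ minPlusMul B x i) ∧ ∃ i ∈ S, x i ≠ ⊤)
      (∃ y : Fin m → WithTop ℝ,
        ltVec (minPlusMul (fun j i => B i j) y) (minPlusMul (fun j i => A i j) y) ∧
        ∀ i ∈ S, minPlusMul (fun j i => B i j) y i ≠ ⊤) := by
  classical
  refine (xor_iff_or_and_not_and _ _).mpr ⟨or_iff_not_imp_left.mpr fun hsol => ?_,
    fun ⟨⟨_, hx, k, hkS, hxk⟩, _, hy, hyS⟩ => not_solution_and_dual hx hy hxk (hyS k hkS)⟩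
  obtain ⟨y, hy, hyS⟩ := exists_dual_of_forall_mem (A := A) (B := B) (univ.filter (· ∈ S))
    fun k hk => (solution_or_dual k).resolve_left fun ⟨X, hX, hXk⟩ =>
      hsol ⟨X, hX, k, (mem_filter.mp hk).2, hXk⟩
  exact ⟨y, hy, fun k hk => hyS k (mem_filter.mpr ⟨mem_univ k, hk⟩)⟩

/-- **Min-plus linear duality (second form)** : for matrices `A, B` over `ℝ∞` and a
subset `S` of columns, exactly one of the following holds: (1) there is a solution of
`A ⊙ x ≤ B ⊙ x` with `x_i` finite for some `i ∈ S`; (2) there is a solution of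
`Bᵀ ⊙ y < Aᵀ ⊙ y` such that the `i`-th coordinate of `Bᵀ ⊙ y` is finite for every
`i ∈ S`. -/
theorem minplus_linear_duality_exists (m n : ℕ) (hm : 0 < m) (hn : 0 < n)
    (A B : Fin m → Fin n → WithTop ℝ) (S : Set (Fin n)) :
    Xor'
      (∃ x : Fin n → WithTop ℝ,
        (∀ i : Fin m, minPlusMul A x i ≤ minPlusMul B x i) ∧ ∃ i ∈ S, x i ≠ ⊤)
      (∃ y : Fin m → WithTop ℝ,
        ltVec (minPlusMul (fun j i => B i j) y) (minPlusMul (fun j i => A i j) y) ∧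
        ∀ i ∈ S, minPlusMul (fun j i => B i j) y i ≠ ⊤) :=
  minplus_linear_duality_exists_general m n A B S
end

section
/- Let m, n ≥ 1 and let A, B be m×n matrices with real entries. Then exactly one of the following two statements holds: (1) there exists x ∈ ℝ^n such that min_{1≤j≤n} (A_{ij} + x_j) ≤ min_{1≤j≤n} (B_{ij} + x_j) for every i ∈ {1, …, m}; (2) there exists y ∈ ℝ^m such that min_{1≤i≤m} (B_{ij} + y_i) < min_{1≤i≤m} (A_{ij} + y_i) for every j ∈ {1, …, n}. -/
/-!
Write `A ⊙ x` for the min-plus product. The Shapley operator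
`S x = -(Bᵀ ⊙ -(A ⊙ x))` gives the least `u` with `A ⊙ x ≤ B ⊙ u`, so alternative (1) says
`S x ≤ x` for some `x`. `S` is monotone and commutes with adding constants, hence is 1-Lipschitz
for the sup norm, and the oscillation of each `S x` is at most `2‖Bᵀ‖`. A fixed point of the
contraction `r • S` (`r < 1`), shifted to vanish at one coordinate, lies in a fixed compact ball
and satisfies `S w = w + const` up to an error `(1 - r) · 2‖Bᵀ‖`; minimising this error over the
ball gives an additive eigenvector `S z = z + const v`. If `v ≤ 0`, `x = z` solves (1); if
`v > 0`, `y = -(A ⊙ z)` solves (2). The alternatives exclude each other because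
`min_{i,j} (y_i + A_ij + x_j)` would be strictly smaller than itself.
-/

open Finset Function Filter Topology

theorem exists_smul_map_eq_self {E : Type*} [NormedAddCommGroup E] [NormedSpace ℝ E]
    [CompleteSpace E] [Nonempty E] {T : E → E} (hT : LipschitzWith 1 T) {r : ℝ} (hr : |r| < 1) :
    ∃ x, r • T x = x := by
  have hcontr : ContractingWith ‖r‖₊ fun x => r • T x := by
    refine ⟨by rwa [← NNReal.coe_lt_coe, coe_nnnorm, Real.norm_eq_abs], ?_⟩
    have h := (lipschitzWith_smul r).comp hT
    rw [mul_one] at h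
    exact h
  exact ⟨_, hcontr.fixedPoint_isFixedPt⟩

section AdditivelyHomogeneous

variable {κ : Type*} [Fintype κ] {T : (κ → ℝ) → κ → ℝ}

theorem lipschitzWith_one_of_monotone_of_map_add_const (hmono : Monotone T)
    (hadd : ∀ x c, T (x + const κ c) = T x + const κ c) : LipschitzWith 1 T := by
  have hle : ∀ x y j, T x j ≤ T y j + dist x y := fun x y j => by
    have hxy : x ≤ y + const κ (dist x y) := fun k => by
      have := (abs_sub_le_iff.1 (Real.dist_eq (x k) (y k) ▸ dist_le_pi_dist x y k)).1
      simp only [Pi.add_apply, const_apply]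
      linarith
    simpa [hadd] using hmono hxy j
  refine LipschitzWith.of_dist_le_mul fun x y => ?_
  rw [NNReal.coe_one, one_mul, dist_pi_le_iff dist_nonneg]
  intro j
  rw [Real.dist_eq, abs_sub_le_iff]
  constructor <;> linarith [hle x y j, hle y x j, dist_comm x y]

variable (hmono : Monotone T) (hadd : ∀ x c, T (x + const κ c) = T x + const κ c) {C : ℝ}
  (hosc : ∀ x j j', T x j - T x j' ≤ C)
include hmono hadd hosc

theorem exists_norm_le_and_norm_map_sub_self_sub_const_le (j₀ : κ) {r : ℝ} (hr₀ : 0 ≤ r)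
    (hr₁ : r < 1) : ∃ w, ‖w‖ ≤ C ∧ ‖T w - w - const κ ((T w - w) j₀)‖ ≤ (1 - r) * C := by
  have hC : 0 ≤ C := by simpa using hosc 0 j₀ j₀
  have habs : ∀ x j, |T x j - T x j₀| ≤ C := fun x j =>
    abs_sub_le_iff.2 ⟨hosc x j j₀, hosc x j₀ j⟩
  obtain ⟨x, hx⟩ := exists_smul_map_eq_self
    (lipschitzWith_one_of_monotone_of_map_add_const hmono hadd) (abs_lt.2 ⟨by linarith, hr₁⟩)
  have hxj : ∀ j, x j = r * T x j := fun j => (congrFun hx j).symm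
  set w := x + const κ (-x j₀) with hw
  have hw_sub : ∀ j, (T w - w) j = (1 - r) * T x j := fun j => by
    simp only [hw, hadd, Pi.sub_apply, Pi.add_apply, const_apply, hxj j]
    ring
  refine ⟨w, (pi_norm_le_iff_of_nonneg hC).2 fun j => ?_,
    (pi_norm_le_iff_of_nonneg (mul_nonneg (by linarith) hC)).2 fun j => ?_⟩
  · have : w j = r * (T x j - T x j₀) := by
      simp only [hw, Pi.add_apply, const_apply, hxj j, hxj j₀]
      ring
    rw [Real.norm_eq_abs, this, abs_mul, abs_of_nonneg hr₀]
    nlinarith [habs x j]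
  · have : (T w - w - const κ ((T w - w) j₀)) j = (1 - r) * (T x j - T x j₀) := by
      simp only [Pi.sub_apply, const_apply, hw_sub]
      ring
    rw [Real.norm_eq_abs, this, abs_mul, abs_of_nonneg (by linarith)]
    exact mul_le_mul_of_nonneg_left (habs x j) (by linarith)

theorem exists_map_eq_add_const [Nonempty κ] : ∃ z v, T z = z + const κ v := by
  obtain ⟨j₀⟩ := ‹Nonempty κ›
  have hC : 0 ≤ C := by simpa using hosc 0 j₀ j₀
  set defect : (κ → ℝ) → ℝ := fun w => ‖T w - w - const κ ((T w - w) j₀)‖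
  have hT := (lipschitzWith_one_of_monotone_of_map_add_const hmono hadd).continuous
  have hcont : Continuous defect := by fun_prop
  obtain ⟨z, -, hz⟩ := (isCompact_closedBall (0 : κ → ℝ) C).exists_isMinOn
    (Metric.nonempty_closedBall.2 hC) hcont.continuousOn
  have hdefect : defect z ≤ 0 := by
    refine ge_of_tendsto (x := 𝓝[<] (1 : ℝ)) (f := fun r => (1 - r) * C) ?_ ?_
    · have : Continuous fun r : ℝ => (1 - r) * C := by fun_prop
      simpa using (this.tendsto 1).mono_left nhdsWithin_le_nhds
    · filter_upwards [Ioo_mem_nhdsLT zero_lt_one] with r hr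
      obtain ⟨w, hw, hdw⟩ :=
        exists_norm_le_and_norm_map_sub_self_sub_const_le hmono hadd hosc j₀ hr.1.le hr.2
      exact (hz (mem_closedBall_zero_iff.2 hw)).trans hdw
  refine ⟨z, (T z - z) j₀, ?_⟩
  rw [← sub_eq_iff_eq_add', ← sub_eq_zero]
  exact norm_le_zero_iff.1 hdefect

end AdditivelyHomogeneous

section MinPlus

variable {ι κ : Type*} [Fintype κ] [Nonempty κ]

noncomputable def minPlus (A : ι → κ → ℝ) (x : κ → ℝ) (i : ι) : ℝ :=
  univ.inf' univ_nonempty fun j => A i j + x j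

variable (A : ι → κ → ℝ) (x : κ → ℝ)

theorem minPlus_le (i : ι) (j : κ) : minPlus A x i ≤ A i j + x j :=
  inf'_le _ (mem_univ j)

theorem le_minPlus_iff {c : ℝ} {i : ι} : c ≤ minPlus A x i ↔ ∀ j, c ≤ A i j + x j := by
  simp [minPlus]

theorem exists_minPlus_eq (i : ι) : ∃ j, minPlus A x i = A i j + x j := by
  obtain ⟨j, -, hj⟩ := exists_mem_eq_inf' univ_nonempty fun j => A i j + x j
  exact ⟨j, hj⟩

theorem minPlus_mono : Monotone (minPlus A) := fun x y hxy i =>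
  (le_minPlus_iff A y).2 fun j => (minPlus_le A x i j).trans (by gcongr; exact hxy j)

theorem minPlus_add_const (c : ℝ) : minPlus A (x + const κ c) = minPlus A x + const ι c := by
  ext i
  obtain ⟨j, hj⟩ := exists_minPlus_eq A x i
  refine le_antisymm ?_ ((le_minPlus_iff _ _).2 fun k => ?_)
  · simpa [hj, add_assoc] using minPlus_le A (x + const κ c) i j
  · simp only [Pi.add_apply, const_apply]
    linarith [minPlus_le A x i k]

theorem minPlus_sub_minPlus_le (i i' : ι) : minPlus A x i - minPlus A x i' ≤ ‖A i - A i'‖ := by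
  obtain ⟨j, hj⟩ := exists_minPlus_eq A x i'
  have hle := minPlus_le A x i j
  have hnorm : A i j - A i' j ≤ ‖A i - A i'‖ :=
    (le_abs_self _).trans (by simpa using norm_le_pi_norm (A i - A i') j)
  linarith

theorem inf'_minPlus_add_le [Fintype ι] [Nonempty ι] (y : ι → ℝ) :
    univ.inf' univ_nonempty (minPlus A x + y) ≤
      univ.inf' univ_nonempty (minPlus (swap A) y + x) := by
  obtain ⟨j, -, hj⟩ := exists_mem_eq_inf' univ_nonempty (minPlus (swap A) y + x)
  obtain ⟨i, hi⟩ := exists_minPlus_eq (swap A) y j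
  calc univ.inf' univ_nonempty (minPlus A x + y)
      ≤ minPlus A x i + y i := inf'_le _ (mem_univ i)
    _ ≤ A i j + x j + y i := by gcongr; exact minPlus_le A x i j
    _ = univ.inf' univ_nonempty (minPlus (swap A) y + x) := by
      rw [hj, Pi.add_apply, hi, swap]; ring

variable {A} {x} in
theorem not_minPlus_le_of_forall_minPlus_swap_lt [Fintype ι] [Nonempty ι] {B : ι → κ → ℝ}
    {y : ι → ℝ} (hy : ∀ j, minPlus (swap B) y j < minPlus (swap A) y j) :
    ¬minPlus A x ≤ minPlus B x := by
  intro hx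
  have hlt : univ.inf' univ_nonempty (minPlus (swap B) y + x) <
      univ.inf' univ_nonempty (minPlus (swap A) y + x) := by
    obtain ⟨j, -, hj⟩ := exists_mem_eq_inf' univ_nonempty (minPlus (swap A) y + x)
    rw [hj]
    exact (inf'_le _ (mem_univ j)).trans_lt (add_lt_add_left (hy j) (x j))
  refine lt_irrefl (univ.inf' univ_nonempty (minPlus A x + y)) ?_
  calc univ.inf' univ_nonempty (minPlus A x + y)
      ≤ univ.inf' univ_nonempty (minPlus B x + y) :=
        inf'_mono_fun fun i _ => add_le_add_left (hx i) (y i)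
    _ ≤ univ.inf' univ_nonempty (minPlus (swap B) y + x) := inf'_minPlus_add_le B x y
    _ < univ.inf' univ_nonempty (minPlus (swap A) y + x) := hlt
    _ ≤ univ.inf' univ_nonempty (minPlus A x + y) := inf'_minPlus_add_le (swap A) y x

end MinPlus

section Shapley

variable {ι κ : Type*} [Fintype ι] [Fintype κ] [Nonempty ι] [Nonempty κ] (A B : ι → κ → ℝ)

noncomputable def shapley (x : κ → ℝ) : κ → ℝ :=
  -minPlus (swap B) (-minPlus A x)

theorem minPlus_le_minPlus_iff_shapley_le {x u : κ → ℝ} :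
    minPlus A x ≤ minPlus B u ↔ shapley A B x ≤ u := by
  have hij : ∀ i j, minPlus A x i ≤ B i j + u j ↔ -u j ≤ B i j + -minPlus A x i := fun i j => by
    constructor <;> intro h <;> linarith
  simp only [Pi.le_def, le_minPlus_iff, shapley, Pi.neg_apply, neg_le, swap, hij]
  exact forall_comm

theorem neg_le_minPlus_swap_neg_minPlus (x : κ → ℝ) : -x ≤ minPlus (swap A) (-minPlus A x) :=
  fun j => (le_minPlus_iff _ _).2 fun i => by
    simp only [Pi.neg_apply, swap]
    linarith [minPlus_le A x i j]

theorem minPlus_swap_lt_of_lt_shapley {x : κ → ℝ} (h : ∀ j, x j < shapley A B x j) (j : κ) :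
    minPlus (swap B) (-minPlus A x) j < minPlus (swap A) (-minPlus A x) j := by
  have hA := neg_le_minPlus_swap_neg_minPlus A x j
  have hB := h j
  simp only [shapley, Pi.neg_apply] at hA hB
  linarith

theorem shapley_mono : Monotone (shapley A B) := fun _ _ h =>
  neg_le_neg (minPlus_mono _ (neg_le_neg (minPlus_mono A h)))

theorem shapley_add_const (x : κ → ℝ) (c : ℝ) :
    shapley A B (x + const κ c) = shapley A B x + const κ c := by
  simp only [shapley, minPlus_add_const, neg_add, const_neg, neg_neg]

theorem shapley_sub_shapley_le (x : κ → ℝ) (j j' : κ) :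
    shapley A B x j - shapley A B x j' ≤ 2 * ‖swap B‖ := by
  have hosc := minPlus_sub_minPlus_le (swap B) (-minPlus A x) j' j
  have hsub := norm_sub_le (swap B j') (swap B j)
  have hj := norm_le_pi_norm (swap B) j
  have hj' := norm_le_pi_norm (swap B) j'
  simp only [shapley, Pi.neg_apply]
  linarith

theorem exists_minPlus_le_or_exists_minPlus_swap_lt :
    (∃ x, minPlus A x ≤ minPlus B x) ∨ ∃ y, ∀ j, minPlus (swap B) y j < minPlus (swap A) y j := by
  obtain ⟨z, v, hz⟩ := exists_map_eq_add_const (shapley_mono A B) (shapley_add_const A B)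
    (shapley_sub_shapley_le A B)
  rcases le_or_gt v 0 with hv | hv
  · refine Or.inl ⟨z, (minPlus_le_minPlus_iff_shapley_le A B).2 fun j => ?_⟩
    simp only [hz, Pi.add_apply, const_apply]
    linarith
  · refine Or.inr ⟨-minPlus A z, minPlus_swap_lt_of_lt_shapley A B fun j => ?_⟩
    simp only [hz, Pi.add_apply, const_apply]
    linarith

theorem minPlus_duality :
    Xor (∃ x, minPlus A x ≤ minPlus B x) (∃ y, ∀ j, minPlus (swap B) y j < minPlus (swap A) y j) :=
  (xor_iff_or_and_not_and _ _).2 ⟨exists_minPlus_le_or_exists_minPlus_swap_lt A B,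
    fun ⟨⟨_, hx⟩, ⟨_, hy⟩⟩ => not_minPlus_le_of_forall_minPlus_swap_lt hy hx⟩

end Shapley

/-- **Min-plus linear duality over ℝ** : for real matrices `A, B`, exactly one of the
following holds: (1) there is `x ∈ ℝ^n` with `A ⊙ x ≤ B ⊙ x` coordinatewise;
(2) there is `y ∈ ℝ^m` with `Bᵀ ⊙ y < Aᵀ ⊙ y` coordinatewise. -/
theorem minplus_linear_duality_real (m n : ℕ) (hm : 0 < m) (hn : 0 < n)
    (A B : Fin m → Fin n → ℝ) :
    Xor'
      (∃ x : Fin n → ℝ, ∀ i : Fin m,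
        Finset.univ.inf' ⟨⟨0, hn⟩, Finset.mem_univ _⟩ (fun j => A i j + x j) ≤
          Finset.univ.inf' ⟨⟨0, hn⟩, Finset.mem_univ _⟩ (fun j => B i j + x j))
      (∃ y : Fin m → ℝ, ∀ j : Fin n,
        Finset.univ.inf' ⟨⟨0, hm⟩, Finset.mem_univ _⟩ (fun i => B i j + y i) <
          Finset.univ.inf' ⟨⟨0, hm⟩, Finset.mem_univ _⟩ (fun i => A i j + y i)) := by
  have : Nonempty (Fin m) := ⟨⟨0, hm⟩⟩
  have : Nonempty (Fin n) := ⟨⟨0, hn⟩⟩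
  exact minPlus_duality A B
end

section
/- Let m, n ≥ 1 and let A be an m×n matrix with real entries. Then exactly one of the following two statements holds: (1) there exists x ∈ ℝ^n such that for every i ∈ {1, …, m} the minimum min_{1≤j≤n} (A_{ij} + x_j) is attained for at least two distinct indices j; (2) there exists z ∈ ℝ^m such that for every j ∈ {1, …, n} the minimum min_{1≤i≤m} (A_{ij} + z_i) is attained for exactly one index i, and for any two distinct j, j′ ∈ {1, …, n} the unique minimizing indices are distinct. -/
/-!
Fix an assignment `σ` of a row to every column and give the edge `j → k` the cost
`A (σ j) k - A (σ j) j`. If every simple cycle has positive cost, shortest-path potentials for the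
costs lowered by a small `ε` make each row `σ j` the strict minimiser of column `j`, and then the
other rows can be lifted out of the way to give `z`. A cycle of nonpositive cost instead yields
`x` for which no row `σ j` of `A ⊙ x` is strictly minimised at `j`. For general `A`, allow each
column `j` a set `R j` of rows and split a set with two elements: witnesses `x` for the two halves
combine, after a shift, into their pointwise minimum. The two alternatives exclude each other
since at a global minimum of `A i j + x j + z i` the two minimisers of row `i` of `A ⊙ x` both
have `i` as column minimiser.
-/

open Filter Topology Function

namespace TropicalDuality

section Digraph

variable {α : Type*} (c : α → α → ℝ)

def pathCost : List α → ℝ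
  | [] => 0
  | [_] => 0
  | a :: b :: t => c a b + pathCost (b :: t)

@[simp] lemma pathCost_nil : pathCost c [] = 0 := rfl

@[simp] lemma pathCost_singleton (a : α) : pathCost c [a] = 0 := rfl

@[simp] lemma pathCost_cons_cons (a b : α) (t : List α) :
    pathCost c (a :: b :: t) = c a b + pathCost c (b :: t) := rfl

def cycleCost (l : List α) : ℝ := pathCost c (l ++ l.take 1)

lemma pathCost_append_singleton :
    ∀ (l : List α) (hl : l ≠ []) (b : α),
      pathCost c (l ++ [b]) = pathCost c l + c (l.getLast hl) b
  | [a], _, b => by simp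
  | a :: a' :: t, _, b => by
    have ih := pathCost_append_singleton (a' :: t) (List.cons_ne_nil _ _) b
    simp only [List.cons_append] at ih
    simp [ih, add_assoc]

lemma pathCost_append_cons :
    ∀ (xs : List α) (b : α) (ys : List α),
      pathCost c (xs ++ b :: ys) = pathCost c (xs ++ [b]) + pathCost c (b :: ys)
  | [], _, _ => by simp
  | [_], _, _ => by simp
  | a :: a' :: xs, b, ys => by
    have ih := pathCost_append_cons (a' :: xs) b ys
    simp only [List.cons_append] at ih
    simp [ih, add_assoc]

lemma pathCost_sub_const (ε : ℝ) :
    ∀ (a : α) (t : List α),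
      pathCost (fun a b => c a b - ε) (a :: t) = pathCost c (a :: t) - t.length * ε
  | _, [] => by simp
  | a, b :: t => by
    simp only [pathCost_cons_cons, pathCost_sub_const ε b t, List.length_cons]
    push_cast
    ring

lemma cycleCost_eq (l : List α) (hl : l ≠ []) :
    cycleCost c l = pathCost c l + c (l.getLast hl) (l.head hl) := by
  obtain ⟨a, t, rfl⟩ := List.exists_cons_of_ne_nil hl
  exact pathCost_append_singleton c (a :: t) hl a

lemma cycleCost_sub_const (ε : ℝ) (l : List α) :
    cycleCost (fun a b => c a b - ε) l = cycleCost c l - l.length * ε := by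
  cases l with
  | nil => simp [cycleCost]
  | cons a t => simpa [cycleCost] using pathCost_sub_const c ε a (t ++ [a])

lemma finite_setOf_nodup [Finite α] : {l : List α | l.Nodup}.Finite := by
  have := Fintype.ofFinite α
  exact (Set.finite_range (Subtype.val : {l : List α // l.Nodup} → List α)).subset
    fun l hl => ⟨⟨l, hl⟩, rfl⟩

/-- Bellman–Ford: minus the cheapest cost of a simple path leaving a vertex is a potential. -/
theorem exists_potential_of_cycleCost_nonneg [Finite α]
    (hc : ∀ l : List α, l.Nodup → 2 ≤ l.length → 0 ≤ cycleCost c l) :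
    ∃ φ : α → ℝ, ∀ a b, a ≠ b → φ b ≤ φ a + c a b := by
  choose t ht hmin using fun a : α =>
    Set.exists_min_image {t | (a :: t).Nodup} (fun t => pathCost c (a :: t))
      (finite_setOf_nodup.subset fun t ht => ht.of_cons) ⟨[], List.nodup_singleton a⟩
  refine ⟨fun a => -pathCost c (a :: t a), fun a b hab => ?_⟩
  suffices pathCost c (a :: t a) ≤ c a b + pathCost c (b :: t b) by linarith
  by_cases ha : a ∈ t b
  · obtain ⟨s, u, hsu⟩ := List.append_of_mem ha
    have hnd : ((b :: s) ++ a :: u).Nodup := by simpa [hsu] using ht b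
    have hcyc := hc ((b :: s) ++ [a])
      (hnd.sublist (((List.nil_sublist u).cons_cons a).append_left _)) (by simp)
    rw [cycleCost_eq c _ (by simp), List.getLast_append_singleton] at hcyc
    have hmin_u := hmin a u (hnd.sublist (List.sublist_append_right _ _))
    have hsplit := pathCost_append_cons c (b :: s) a u
    rw [hsu]
    simp only [List.cons_append, List.head_cons] at *
    linarith
  · exact hmin a (b :: t b) (List.nodup_cons.2 ⟨by simpa [hab] using ha, ht b⟩)

theorem exists_strictPotential_of_cycleCost_pos [Finite α]
    (hc : ∀ l : List α, l.Nodup → 2 ≤ l.length → 0 < cycleCost c l) :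
    ∃ φ : α → ℝ, ∀ a b, a ≠ b → φ b < φ a + c a b := by
  have := Fintype.ofFinite α
  set S := {l : List α | l.Nodup ∧ 2 ≤ l.length}
  obtain ⟨ε, hεS, hε⟩ : ∃ ε : ℝ, (∀ l ∈ S, Fintype.card α * ε ≤ cycleCost c l) ∧ 0 < ε := by
    refine (((finite_setOf_nodup.subset fun l hl => hl.1).eventually_all.2 fun l hl => ?_).and
      self_mem_nhdsWithin).exists (f := 𝓝[>] (0 : ℝ))
    have h : Tendsto (fun ε : ℝ => Fintype.card α * ε) (𝓝[>] 0) (𝓝 0) := by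
      simpa using ((continuous_const_mul (Fintype.card α : ℝ)).tendsto 0).mono_left
        nhdsWithin_le_nhds
    exact h.eventually_le_const (hc l hl.1 hl.2)
  obtain ⟨φ, hφ⟩ := exists_potential_of_cycleCost_nonneg (fun a b => c a b - ε)
    fun l hnd hlen => by
      have hlen_le : (l.length : ℝ) ≤ Fintype.card α := by exact_mod_cast hnd.length_le_card
      rw [cycleCost_sub_const]
      nlinarith [hεS l ⟨hnd, hlen⟩]
  exact ⟨φ, fun a b hab => by linarith [hφ a b hab]⟩

/-- Along the cycle `x` is the cost of the remaining path to its last vertex; every other vertex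
points to the head of the cycle. -/
theorem exists_descent_of_cycleCost_nonpos [DecidableEq α] {l : List α} (hl : l.Nodup)
    (hlen : 2 ≤ l.length) (hc : cycleCost c l ≤ 0) :
    ∃ x : α → ℝ, ∀ a, ∃ b, b ≠ a ∧ x b + c a b ≤ x a := by
  have hne : l ≠ [] := List.ne_nil_of_length_pos (by omega)
  set x₀ : α → ℝ := fun v => pathCost c (l.drop (l.idxOf v))
  have hcycle : ∀ a ∈ l, ∃ b ∈ l, b ≠ a ∧ x₀ b + c a b ≤ x₀ a := by
    intro a ha
    have hi : l.idxOf a < l.length := List.idxOf_lt_length_iff.2 ha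
    have hai : l[l.idxOf a] = a := List.getElem_idxOf hi
    by_cases hnext : l.idxOf a + 1 < l.length
    · have hidx := hl.idxOf_getElem _ hnext
      refine ⟨l[l.idxOf a + 1], List.getElem_mem _, fun h => by rw [h] at hidx; omega, le_of_eq ?_⟩
      simp only [x₀, hidx, List.drop_eq_getElem_cons hi, List.drop_eq_getElem_cons hnext, hai,
        pathCost_cons_cons]
      ring
    · have h0 : 0 < l.length := by omega
      have hidx := hl.idxOf_getElem 0 h0
      refine ⟨l[0], List.getElem_mem _, fun h => by rw [h] at hidx; omega, ?_⟩
      have hlast : l.getLast hne = a := by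
        rw [List.getLast_eq_getElem]
        convert hai using 2
        omega
      have hdrop : l.drop (l.idxOf a) = [a] := by
        rw [List.drop_eq_getElem_cons hi, hai, List.drop_of_length_le (by omega)]
      rw [cycleCost_eq c l hne, hlast, List.head_eq_getElem] at hc
      simp only [x₀, hidx, hdrop, List.drop_zero, pathCost_singleton]
      linarith
  refine ⟨fun v => if v ∈ l then x₀ v else x₀ (l.head hne) + c v (l.head hne), fun a => ?_⟩
  by_cases ha : a ∈ l
  · obtain ⟨b, hb, hba, h⟩ := hcycle a ha
    exact ⟨b, hba, by simpa [ha, hb] using h⟩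
  · exact ⟨l.head hne, fun h => ha (h ▸ List.head_mem hne), by simp [ha, List.head_mem hne]⟩

theorem exists_strictPotential_or_exists_descent [Finite α] :
    (∃ φ : α → ℝ, ∀ a b, a ≠ b → φ b < φ a + c a b) ∨
      ∃ x : α → ℝ, ∀ a, ∃ b, b ≠ a ∧ x b + c a b ≤ x a := by
  classical
  by_cases h : ∀ l : List α, l.Nodup → 2 ≤ l.length → 0 < cycleCost c l
  · exact .inl (exists_strictPotential_of_cycleCost_pos c h)
  · simp only [not_forall, not_lt] at h
    obtain ⟨l, hl, hlen, hc⟩ := h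
    exact .inr (exists_descent_of_cycleCost_nonpos c hl hlen hc)

end Digraph

section Tropical

variable {ι κ : Type*} (A : ι → κ → ℝ)

def NotStrictMin (x : κ → ℝ) (i : ι) (j : κ) : Prop :=
  ∃ j', j' ≠ j ∧ A i j' + x j' ≤ A i j + x j

def IsTropicalSolution (x : κ → ℝ) : Prop :=
  ∀ i, ∃ j₁ j₂, j₁ ≠ j₂ ∧ A i j₁ + x j₁ = A i j₂ + x j₂ ∧ ∀ j, A i j₁ + x j₁ ≤ A i j + x j

def IsStrictAssignment (σ : κ → ι) : Prop :=
  ∃ ζ : κ → ℝ, ∀ j k, j ≠ k → A (σ k) k + ζ k < A (σ j) k + ζ j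

def HasDistinctUniqueColumnMinima (z : ι → ℝ) : Prop :=
  (∀ j, ∃! i, ∀ i', A i j + z i ≤ A i' j + z i') ∧
    ∀ j j', j ≠ j' → ∀ i, (∀ i', A i j + z i ≤ A i' j + z i') →
      ¬ ∀ i', A i j' + z i ≤ A i' j' + z i'

variable {A}

lemma NotStrictMin.inf_left {x y : κ → ℝ} {i : ι} {j : κ} (h : NotStrictMin A x i j)
    (hj : x j ≤ y j) : NotStrictMin A (x ⊓ y) i j := by
  obtain ⟨j', hj', hle⟩ := h
  refine ⟨j', hj', ?_⟩
  rw [Pi.inf_apply, Pi.inf_apply, inf_eq_left.2 hj]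
  linarith [inf_le_left (a := x j') (b := y j')]

lemma NotStrictMin.inf_right {x y : κ → ℝ} {i : ι} {j : κ} (h : NotStrictMin A y i j)
    (hj : y j ≤ x j) : NotStrictMin A (x ⊓ y) i j :=
  inf_comm y x ▸ h.inf_left hj

lemma NotStrictMin.add_const {x : κ → ℝ} {i : ι} {j : κ} (h : NotStrictMin A x i j) (t : ℝ) :
    NotStrictMin A (fun j => x j + t) i j :=
  let ⟨j', hj', hle⟩ := h
  ⟨j', hj', by linarith⟩

/-- Witnesses combine tropically: shifted to agree at `j₀`, their pointwise minimum is a witness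
wherever the one attaining the minimum is, hence for all rows of `s₁ ∪ s₂` in column `j₀`. -/
lemma exists_notStrictMin_update_union [DecidableEq κ] {R : κ → Set ι} {j₀ : κ}
    {s₁ s₂ : Set ι} (h₁ : ∃ x, ∀ j, ∀ i ∈ update R j₀ s₁ j, NotStrictMin A x i j)
    (h₂ : ∃ x, ∀ j, ∀ i ∈ update R j₀ s₂ j, NotStrictMin A x i j) :
    ∃ x, ∀ j, ∀ i ∈ update R j₀ (s₁ ∪ s₂) j, NotStrictMin A x i j := by
  obtain ⟨x₁, hx₁⟩ := h₁
  obtain ⟨x₂, hx₂⟩ := h₂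
  set y : κ → ℝ := fun j => x₂ j + (x₁ j₀ - x₂ j₀)
  have hy : ∀ j, ∀ i ∈ update R j₀ s₂ j, NotStrictMin A y i j :=
    fun j i hi => (hx₂ j i hi).add_const _
  refine ⟨x₁ ⊓ y, fun j i hi => ?_⟩
  rcases eq_or_ne j j₀ with rfl | hj
  · have hy₀ : y j = x₁ j := by simp [y]
    rcases update_self j (s₁ ∪ s₂) R ▸ hi with hi | hi
    · exact (hx₁ j i (by simpa using hi)).inf_left hy₀.ge
    · exact (hy j i (by simpa using hi)).inf_right hy₀.le
  · rw [update_of_ne hj] at hi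
    rcases le_total (x₁ j) (y j) with h | h
    · exact (hx₁ j i (by rwa [update_of_ne hj])).inf_left h
    · exact (hy j i (by rwa [update_of_ne hj])).inf_right h

variable (A) in
theorem isStrictAssignment_or_exists_notStrictMin [Finite κ] (ρ : κ → ι) :
    IsStrictAssignment A ρ ∨ ∃ x, ∀ j, NotStrictMin A x (ρ j) j := by
  rcases exists_strictPotential_or_exists_descent (fun j k => A (ρ j) k - A (ρ j) j) with
    ⟨φ, hφ⟩ | ⟨x, hx⟩
  · exact .inl ⟨fun j => φ j - A (ρ j) j, fun j k hjk => by linarith [hφ j k hjk]⟩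
  · refine .inr ⟨x, fun j => ?_⟩
    obtain ⟨k, hkj, hk⟩ := hx j
    exact ⟨k, hkj, by linarith⟩

variable (A) in
theorem exists_isStrictAssignment_or_exists_notStrictMin [Finite ι] [Finite κ]
    (R : κ → Set ι) (hR : ∀ j, (R j).Nonempty) :
    (∃ σ : κ → ι, (∀ j, σ j ∈ R j) ∧ IsStrictAssignment A σ) ∨
      ∃ x, ∀ j, ∀ i ∈ R j, NotStrictMin A x i j := by
  classical
  induction R using WellFoundedLT.induction with
  | _ R ih =>
  by_cases hsplit : ∃ j₀, ∃ i₁ ∈ R j₀, ∃ i₂ ∈ R j₀, i₁ ≠ i₂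
  · obtain ⟨j₀, i₁, hi₁, i₂, hi₂, hne⟩ := hsplit
    have hdrop : ∀ i ∈ R j₀, ∀ i' ∈ R j₀, i' ≠ i →
        (∃ σ : κ → ι, (∀ j, σ j ∈ R j) ∧ IsStrictAssignment A σ) ∨
          ∃ x, ∀ j, ∀ i'' ∈ update R j₀ (R j₀ \ {i}) j, NotStrictMin A x i'' j := by
      intro i hi i' hi' hi'i
      have hlt : update R j₀ (R j₀ \ {i}) < R :=
        update_lt_self_iff.2 (Set.sdiff_singleton_ssubset.2 hi)
      refine (ih _ hlt fun j => ?_).imp_left fun ⟨σ, hσ, h⟩ => ⟨σ, fun j => hlt.le j (hσ j), h⟩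
      rcases eq_or_ne j j₀ with rfl | hj
      · exact ⟨i', by simp [hi', hi'i]⟩
      · simpa [update_of_ne hj] using hR j
    rcases hdrop i₁ hi₁ i₂ hi₂ hne.symm with h | h₁
    · exact .inl h
    rcases hdrop i₂ hi₂ i₁ hi₁ hne with h | h₂
    · exact .inl h
    have hunion : R j₀ \ {i₁} ∪ R j₀ \ {i₂} = R j₀ := by
      rw [← Set.sdiff_inter, Set.singleton_inter_eq_empty.2 (by simpa using hne), Set.sdiff_empty]
    exact .inr (by simpa [hunion] using exists_notStrictMin_update_union h₁ h₂)
  · choose ρ hρ using hR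
    have hRρ : ∀ j, R j = {ρ j} := fun j =>
      Set.Subsingleton.eq_singleton_of_mem (fun a ha b hb => not_not.1 fun hab =>
        hsplit ⟨j, a, ha, b, hb, hab⟩) (hρ j)
    refine (isStrictAssignment_or_exists_notStrictMin A ρ).imp (fun h => ⟨ρ, hρ, h⟩) ?_
    rintro ⟨x, hx⟩
    exact ⟨x, fun j i hi => (Set.mem_singleton_iff.1 (hRρ j ▸ hi)) ▸ hx j⟩

lemma isTropicalSolution_of_notStrictMin [Finite κ] [Nonempty κ] {x : κ → ℝ}
    (h : ∀ i j, NotStrictMin A x i j) : IsTropicalSolution A x := by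
  intro i
  obtain ⟨j₁, hj₁⟩ := Finite.exists_min fun j => A i j + x j
  obtain ⟨j₂, hj₂, hle⟩ := h i j₁
  exact ⟨j₁, j₂, hj₂.symm, le_antisymm (hj₁ j₂) hle, hj₁⟩

lemma hasDistinctUniqueColumnMinima_of_injective {σ : κ → ι} {z : ι → ℝ} (hσ : Injective σ)
    (hz : ∀ j i, i ≠ σ j → A (σ j) j + z (σ j) < A i j + z i) :
    HasDistinctUniqueColumnMinima A z := by
  have hmin : ∀ j i, (∀ i', A i j + z i ≤ A i' j + z i') ↔ i = σ j := by
    refine fun j i => ⟨fun h => not_not.1 fun hi => ?_, ?_⟩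
    · linarith [hz j i hi, h (σ j)]
    · rintro rfl i'
      rcases eq_or_ne i' (σ j) with rfl | hi'
      · rfl
      · exact (hz j i' hi').le
  exact ⟨fun j => ⟨σ j, (hmin j _).2 rfl, fun i hi => (hmin j i).1 hi⟩,
    fun j j' hjj' i hi hi' => hjj' (hσ (((hmin j i).1 hi).symm.trans ((hmin j' i).1 hi')))⟩

lemma IsStrictAssignment.injective {σ : κ → ι} (hσ : IsStrictAssignment A σ) : Injective σ := by
  obtain ⟨ζ, hζ⟩ := hσ
  refine fun j k hjk => not_not.1 fun hne => ?_
  have h₁ := hζ j k hne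
  have h₂ := hζ k j (Ne.symm hne)
  rw [hjk] at h₁ h₂
  linarith

theorem IsStrictAssignment.exists_hasDistinctUniqueColumnMinima [Fintype κ] {σ : κ → ι}
    (hσ : IsStrictAssignment A σ) : ∃ z, HasDistinctUniqueColumnMinima A z := by
  have hinj := hσ.injective
  obtain ⟨ζ, hζ⟩ := hσ
  -- rows outside the image of `σ` are lifted above every column minimum
  refine ⟨extend σ ζ fun i => 1 + ∑ k, |A (σ k) k + ζ k - A i k|,
    hasDistinctUniqueColumnMinima_of_injective hinj fun j i hi => ?_⟩
  rw [hinj.extend_apply]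
  by_cases hrange : ∃ k, σ k = i
  · obtain ⟨k, rfl⟩ := hrange
    rw [hinj.extend_apply]
    exact hζ k j fun hkj => hi (hkj ▸ rfl)
  · rw [extend_apply' _ _ _ hrange]
    have := Finset.single_le_sum (fun k _ => abs_nonneg (A (σ k) k + ζ k - A i k))
      (Finset.mem_univ j)
    linarith [le_abs_self (A (σ j) j + ζ j - A i j)]

/-- At a global minimum `(i₀, j₀)` of `A i j + x j + z i`, both minimisers of row `i₀` of
`A ⊙ x` are columns whose minimum in `Aᵀ ⊙ z` is attained at `i₀`. -/
theorem IsTropicalSolution.not_hasDistinctUniqueColumnMinima [Finite ι] [Finite κ]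
    [Nonempty κ] {x : κ → ℝ} {z : ι → ℝ} (hx : IsTropicalSolution A x) :
    ¬ HasDistinctUniqueColumnMinima A z := by
  rintro ⟨hcol, hdistinct⟩
  obtain ⟨j⟩ := ‹Nonempty κ›
  obtain ⟨i, -⟩ := hcol j
  have : Nonempty ι := ⟨i⟩
  obtain ⟨⟨i₀, j₀⟩, hmin⟩ := Finite.exists_min fun p : ι × κ => A p.1 p.2 + x p.2 + z p.1
  obtain ⟨j₁, j₂, hne, heq, hrow⟩ := hx i₀
  have hcolmin : ∀ j, A i₀ j + x j = A i₀ j₁ + x j₁ → ∀ i', A i₀ j + z i₀ ≤ A i' j + z i' :=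
    fun j hj i' => by linarith [hmin (i', j), hrow j₀]
  exact hdistinct j₁ j₂ hne i₀ (hcolmin j₁ rfl) (hcolmin j₂ heq.symm)

end Tropical

end TropicalDuality

open TropicalDuality in
/-- **Tropical linear duality over ℝ** : for a real matrix `A`, exactly one of the
following holds: (1) there is `x ∈ ℝ^n` such that in every row `i` the minimum
`min_j (A_{ij} + x_j)` is attained for at least two distinct indices `j`;
(2) there is `z ∈ ℝ^m` such that in every column `j` the minimum `min_i (A_{ij} + z_i)`
is attained for exactly one index `i`, and the unique minimizing indices of distinct
columns are distinct. -/
theorem tropical_linear_duality_real (m n : ℕ) (hm : 0 < m) (hn : 0 < n)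
    (A : Fin m → Fin n → ℝ) :
    Xor'
      (∃ x : Fin n → ℝ, ∀ i : Fin m,
        ∃ j₁ j₂ : Fin n, j₁ ≠ j₂ ∧ A i j₁ + x j₁ = A i j₂ + x j₂ ∧
          ∀ j : Fin n, A i j₁ + x j₁ ≤ A i j + x j)
      (∃ z : Fin m → ℝ,
        (∀ j : Fin n, ∃! i : Fin m, ∀ i' : Fin m, A i j + z i ≤ A i' j + z i') ∧
        (∀ j j' : Fin n, j ≠ j' → ∀ i : Fin m,
          (∀ i' : Fin m, A i j + z i ≤ A i' j + z i') →
          ¬ (∀ i' : Fin m, A i j' + z i ≤ A i' j' + z i'))) := by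
  have : Nonempty (Fin m) := ⟨⟨0, hm⟩⟩
  have : Nonempty (Fin n) := ⟨⟨0, hn⟩⟩
  refine (xor_iff_or_and_not_and _ _).2 ⟨?_, fun ⟨⟨x, hx⟩, z, hz⟩ =>
    IsTropicalSolution.not_hasDistinctUniqueColumnMinima hx hz⟩
  rcases exists_isStrictAssignment_or_exists_notStrictMin A (fun _ => Set.univ)
      fun _ => Set.univ_nonempty with ⟨σ, -, hσ⟩ | ⟨x, hx⟩
  · exact .inr hσ.exists_hasDistinctUniqueColumnMinima
  · exact .inl ⟨x, isTropicalSolution_of_notStrictMin fun i j => hx j i trivial⟩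
end

section
/- For every system F = {f_1, …, f_k} (k ≥ 1) of tropical polynomials in n variables over ℝ∞, each of degree at most d, there exists a finite system G of min-plus polynomials in the same n variables, each of degree at most d, such that a point a ∈ ℝ∞^n is a root of G if and only if a is a root of F. -/
open scoped Classical

/-- Exponent vectors in `n` variables. -/
abbrev Exp (n : ℕ) : Type := Fin n → ℕ

/-- The total degree `|I|` of an exponent vector. -/
def expDeg {n : ℕ} (I : Exp n) : ℕ := ∑ j, I j

/-- A tropical polynomial: a finite nonempty support of exponent vectors
together with real coefficients. -/
structure TropPoly (n : ℕ) where
  supp : Finset (Exp n)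
  supp_nonempty : supp.Nonempty
  coeff : Exp n → ℝ

/-- The degree of a tropical polynomial. -/
def TropPoly.deg {n : ℕ} (f : TropPoly n) : ℕ := f.supp.sup expDeg

/-- Value of the monomial of `f` with exponent `I` at a point of `ℝ^n`. -/
def TropPoly.mono {n : ℕ} (f : TropPoly n) (I : Exp n) (a : Fin n → ℝ) : ℝ :=
  f.coeff I + ∑ j, (I j : ℝ) * a j

/-- Value of a tropical polynomial at a point of `ℝ^n`. -/
def TropPoly.eval {n : ℕ} (f : TropPoly n) (a : Fin n → ℝ) : ℝ :=
  f.supp.inf' f.supp_nonempty (fun I => f.mono I a)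

/-- A point of `ℝ^n` is a root if the minimum is attained at two distinct monomials. -/
def TropPoly.IsRoot {n : ℕ} (f : TropPoly n) (a : Fin n → ℝ) : Prop :=
  ∃ I ∈ f.supp, ∃ J ∈ f.supp, I ≠ J ∧
    f.mono I a = f.eval a ∧ f.mono J a = f.eval a

/-- Value of the monomial of `f` with exponent `I` at a point of `ℝ∞^n`
(with the convention `0 • ⊤ = 0`). -/
noncomputable def TropPoly.monoT {n : ℕ} (f : TropPoly n) (I : Exp n)
    (a : Fin n → WithTop ℝ) : WithTop ℝ :=
  (f.coeff I : WithTop ℝ) + ∑ j, (I j) • a j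

/-- Value of a tropical polynomial at a point of `ℝ∞^n`. -/
noncomputable def TropPoly.evalT {n : ℕ} (f : TropPoly n) (a : Fin n → WithTop ℝ) : WithTop ℝ :=
  f.supp.inf (fun I => f.monoT I a)

/-- A point of `ℝ∞^n` is a root if the minimum is `+∞` or is attained at two
distinct monomials. -/
noncomputable def TropPoly.IsRootT {n : ℕ} (f : TropPoly n) (a : Fin n → WithTop ℝ) : Prop :=
  f.evalT a = ⊤ ∨ ∃ I ∈ f.supp, ∃ J ∈ f.supp, I ≠ J ∧
    f.monoT I a = f.evalT a ∧ f.monoT J a = f.evalT a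

/-- The coefficient of the monomial `x^I` in `x^J ⊙ f`, which is `+∞`
unless `I - J` belongs to the support of `f`. -/
noncomputable def shiftCoeff {n : ℕ} (f : TropPoly n) (J I : Exp n) : WithTop ℝ :=
  if J ≤ I ∧ I - J ∈ f.supp then (f.coeff (I - J) : WithTop ℝ) else ⊤

/-- The entry `c_{f}(I-J) + y_I` of the Macaulay system. -/
noncomputable def macVal {n : ℕ} (f : TropPoly n) (J : Exp n)
    (y : Exp n → WithTop ℝ) (I : Exp n) : WithTop ℝ :=
  shiftCoeff f J I + y I

/-- Characterization of tropical roots via erasing monomials. -/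
lemma isRootT_iff_erase {n : ℕ} (f : TropPoly n) (a : Fin n → WithTop ℝ) :
    f.IsRootT a ↔ ∀ I ∈ f.supp, f.evalT a = (f.supp.erase I).inf (fun J => f.monoT J a) := by
  constructor
  · rintro (htop | ⟨I, hI, J, hJ, hIJ, hIe, hJe⟩)
    · intro K _
      rw [htop]
      symm
      rw [Finset.inf_eq_top_iff]
      intro L hL
      exact ((Finset.inf_eq_top_iff _ _).mp htop) L (Finset.mem_of_mem_erase hL)
    · intro K _
      apply le_antisymm
      · exact Finset.inf_mono (Finset.erase_subset _ _)
      · rcases ne_or_eq I K with h | h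
        · calc (f.supp.erase K).inf (fun J => f.monoT J a)
              ≤ f.monoT I a := Finset.inf_le (Finset.mem_erase.mpr ⟨h, hI⟩)
            _ = f.evalT a := hIe
        · have hJK : J ≠ K := fun hh => hIJ (h.trans hh.symm)
          calc (f.supp.erase K).inf (fun J => f.monoT J a)
              ≤ f.monoT J a := Finset.inf_le (Finset.mem_erase.mpr ⟨hJK, hJ⟩)
            _ = f.evalT a := hJe
  · intro h
    by_cases htop : f.evalT a = ⊤
    · exact Or.inl htop
    · right
      obtain ⟨I0, hI0, hI0e⟩ :=
        Finset.exists_mem_eq_inf f.supp f.supp_nonempty (fun J => f.monoT J a)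
      have h1 := h I0 hI0
      have hne : (f.supp.erase I0).Nonempty := by
        by_contra he
        rw [Finset.not_nonempty_iff_eq_empty] at he
        rw [he, Finset.inf_empty] at h1
        exact htop h1
      obtain ⟨J0, hJ0, hJ0e⟩ :=
        Finset.exists_mem_eq_inf _ hne (fun J => f.monoT J a)
      refine ⟨I0, hI0, J0, Finset.mem_of_mem_erase hJ0,
        (Finset.ne_of_mem_erase hJ0).symm, hI0e.symm, ?_⟩
      rw [← hJ0e, ← h1]

/-- The companion polynomial to `f` for the monomial `I`. -/
noncomputable def companion {n : ℕ} (f : TropPoly n) (I : Exp n) : TropPoly n :=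
  if h : (f.supp.erase I).Nonempty then ⟨f.supp.erase I, h, f.coeff⟩
  else ⟨f.supp, f.supp_nonempty, fun J => f.coeff J + 1⟩

lemma companion_deg_le {n : ℕ} (f : TropPoly n) (I : Exp n) :
    (companion f I).deg ≤ f.deg := by
  unfold companion
  split
  · exact Finset.sup_mono (Finset.erase_subset _ _)
  · exact le_rfl

lemma companion_evalT_eq {n : ℕ} (f : TropPoly n) (I : Exp n) (hI : I ∈ f.supp)
    (a : Fin n → WithTop ℝ) :
    (f.evalT a = (companion f I).evalT a ↔
      f.evalT a = (f.supp.erase I).inf (fun J => f.monoT J a)) := by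
  unfold companion
  split
  case isTrue h =>
    have : (TropPoly.mk (f.supp.erase I) h f.coeff).evalT a
        = (f.supp.erase I).inf (fun J => f.monoT J a) := rfl
    rw [this]
  case isFalse h =>
    rw [Finset.not_nonempty_iff_eq_empty] at h
    have hsupp : f.supp = {I} := by
      apply Finset.eq_singleton_iff_unique_mem.mpr
      refine ⟨hI, fun x hx => ?_⟩
      by_contra hxI
      exact Finset.notMem_empty x (h ▸ Finset.mem_erase.mpr ⟨hxI, hx⟩)
    rw [h, Finset.inf_empty]
    have heval : f.evalT a = f.monoT I a := by
      rw [TropPoly.evalT, hsupp, Finset.inf_singleton]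
    have heval' : (TropPoly.mk f.supp f.supp_nonempty (fun J => f.coeff J + 1)).evalT a
        = ((f.coeff I + 1 : ℝ) : WithTop ℝ) + ∑ j, (I j) • a j := by
      simp [TropPoly.evalT, hsupp, TropPoly.monoT]
    rw [heval, heval', TropPoly.monoT]
    set s := ∑ j, (I j) • a j with hs
    constructor
    · intro hEq
      rcases eq_or_ne s ⊤ with hstop | hstop
      · rw [hstop, add_top]
      · lift s to ℝ using hstop with t
        rw [← WithTop.coe_add, ← WithTop.coe_add, WithTop.coe_inj] at hEq
        linarith
    · intro hEq
      have : s = ⊤ := by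
        by_contra hstop
        exact (WithTop.add_ne_top.mpr ⟨WithTop.coe_ne_top, hstop⟩) hEq
      rw [this, add_top, add_top]

/-- **From tropical systems to min-plus systems** : for every system `F` of tropical
polynomials in `n` variables over `ℝ∞`, each of degree at most `d`, there is a finite
system `G` of min-plus polynomials in the same variables, each of degree at most `d`,
with exactly the same roots in `ℝ∞^n`. -/
theorem tropical_to_minplus (n k d : ℕ) (hk : 1 ≤ k) (F : Fin k → TropPoly n)
    (hdeg : ∀ i : Fin k, (F i).deg ≤ d) :
    ∃ (k' : ℕ) (G : Fin k' → TropPoly n × TropPoly n),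
      (∀ j : Fin k', max (G j).1.deg (G j).2.deg ≤ d) ∧
      ∀ a : Fin n → WithTop ℝ,
        (∀ j : Fin k', (G j).1.evalT a = (G j).2.evalT a) ↔
          (∀ i : Fin k, (F i).IsRootT a) := by
  classical
  set P : Finset ((Fin k) × Exp n) :=
    (Finset.univ : Finset (Fin k)).biUnion (fun i => (F i).supp.image (fun I => (i, I)))
    with hP
  have hmemP : ∀ p : (Fin k) × Exp n, p ∈ P ↔ p.2 ∈ (F p.1).supp := by
    intro p
    simp only [hP, Finset.mem_biUnion, Finset.mem_univ, true_and, Finset.mem_image]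
    constructor
    · rintro ⟨i, I, hI, hpi⟩
      rw [← hpi]; exact hI
    · intro hp
      exact ⟨p.1, p.2, hp, rfl⟩
  let e := P.equivFin
  refine ⟨P.card, fun j => (F (e.symm j).1.1, companion (F (e.symm j).1.1) (e.symm j).1.2),
    ?_, ?_⟩
  · intro j
    exact max_le (hdeg _) (le_trans (companion_deg_le _ _) (hdeg _))
  · intro a
    have key : (∀ j : Fin P.card,
        (F (e.symm j).1.1).evalT a = (companion (F (e.symm j).1.1) (e.symm j).1.2).evalT a) ↔
        ∀ p ∈ P, (F p.1).evalT a = (companion (F p.1) p.2).evalT a := by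
      constructor
      · intro h p hp
        have := h (e ⟨p, hp⟩)
        rwa [Equiv.symm_apply_apply] at this
      · intro h j
        exact h (e.symm j).1 (e.symm j).2
    rw [key]
    constructor
    · intro h i
      rw [isRootT_iff_erase]
      intro I hI
      have hp : ((i, I) : (Fin k) × Exp n) ∈ P := (hmemP (i, I)).mpr hI
      exact (companion_evalT_eq (F i) I hI a).mp (h (i, I) hp)
    · intro h p hp
      have hI : p.2 ∈ (F p.1).supp := (hmemP p).mp hp
      exact (companion_evalT_eq (F p.1) p.2 hI a).mpr
        ((isRootT_iff_erase (F p.1) a).mp (h p.1) p.2 hI)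
end

section
/- Let P ⊆ ℝ^n be the convex hull of a finite set of points and suppose P has nonempty interior. Let P′ = (n+2)·P = {(n+2)p : p ∈ P}. Then for every point x in the interior of P′ there exists α ∈ ℝ^n such that x is an extreme point of the translate α + P = {α + p : p ∈ P} and α + P is contained in the interior of P′. -/
open scoped Pointwise

/-!
Write `x = (n+2) • y` with `y ∈ interior P`. By Carathéodory's theorem `y` is a convex
combination of at most `n + 1` vertices of `P`, so some vertex `v` has weight at least
`1/(n+1)`; exchanging `v` for an arbitrary `p ∈ P` in that combination shows
`y + (p - v)/(n+1) ∈ P`. As `1/(n+2) < 1/(n+1)` and `y` is interior, `y + (p - v)/(n+2)` lies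
in `interior P`, i.e. the translate `x - v + P` lies in `interior ((n+2) • P)`, and it has the
vertex `x - v + v = x`.
-/

open Set Finset Module

section Ring

variable {𝕜 E : Type*} [Ring 𝕜] [PartialOrder 𝕜] [IsOrderedRing 𝕜]
  [AddCommGroup E] [Module 𝕜 E]

theorem add_mem_extremePoints_image_add_left {A : Set E} {a v : E}
    (hv : v ∈ A.extremePoints 𝕜) : a + v ∈ ((a + ·) '' A).extremePoints 𝕜 := by
  refine ⟨mem_image_of_mem _ hv.1, ?_⟩
  rintro _ ⟨x, hx, rfl⟩ _ ⟨y, hy, rfl⟩ hxy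
  rw [hv.2 hx hy ((mem_openSegment_translate 𝕜 a).1 hxy)]

end Ring

section Field

variable {𝕜 E : Type*} [Field 𝕜] [LinearOrder 𝕜] [IsStrictOrderedRing 𝕜]
  [AddCommGroup E] [Module 𝕜 E] {P : Set E}

theorem Convex.sum_smul_add_smul_sub_mem {ι : Type*} [Fintype ι] [DecidableEq ι]
    (hP : Convex 𝕜 P) {w : ι → 𝕜} {z : ι → E} (hw₀ : ∀ i, 0 ≤ w i) (hw₁ : ∑ i, w i = 1)
    (hz : ∀ i, z i ∈ P) (j : ι) {p : E} (hp : p ∈ P) :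
    ∑ i, w i • z i + w j • (p - z j) ∈ P := by
  have h : ∑ i, w i • Function.update z j p i = ∑ i, w i • z i + w j • (p - z j) := by
    rw [← sub_eq_iff_eq_add', ← Finset.sum_sub_distrib, Finset.sum_eq_single j]
    · simp [smul_sub]
    · intro i _ hij
      simp [hij]
    · simp
  rw [← h]
  refine hP.sum_mem (fun i _ => hw₀ i) hw₁ fun i _ => ?_
  rcases eq_or_ne i j with rfl | hij
  · simpa using hp
  · simpa [hij] using hz i

theorem Convex.exists_add_smul_sub_mem [FiniteDimensional 𝕜 E] (hP : Convex 𝕜 P) {S : Set E}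
    (hSP : S ⊆ P) {y : E} (hy : y ∈ convexHull 𝕜 S) :
    ∃ v ∈ S, ∀ p ∈ P, y + ((finrank 𝕜 E : 𝕜) + 1)⁻¹ • (p - v) ∈ P := by
  classical
  have hyP : y ∈ P := convexHull_min hSP hP hy
  obtain ⟨ι, _, z, w, hzS, hz, hw₀, hw₁, rfl⟩ := eq_pos_convex_span_of_mem_convexHull hy
  set c : 𝕜 := ((finrank 𝕜 E : 𝕜) + 1)⁻¹
  have hcard : (Fintype.card ι : 𝕜) ≤ finrank 𝕜 E + 1 := by
    exact_mod_cast hz.card_le_finrank_succ.trans (Nat.add_le_add_right (Submodule.finrank_le _) 1)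
  have hι : (Finset.univ : Finset ι).Nonempty :=
    nonempty_of_sum_ne_zero (hw₁.trans_ne one_ne_zero)
  obtain ⟨j, -, hj⟩ : ∃ j ∈ Finset.univ, c ≤ w j := by
    refine Finset.exists_le_of_sum_le (f := fun _ => c) hι ?_
    rw [sum_const, hw₁, card_univ, nsmul_eq_mul, ← div_eq_mul_inv]
    exact div_le_one_of_le₀ hcard (by positivity)
  refine ⟨z j, hzS (mem_range_self j), fun p hp => ?_⟩
  have hq := hP.sum_smul_add_smul_sub_mem (fun i => (hw₀ i).le) hw₁
    (fun i => hSP (hzS (mem_range_self i))) j hp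
  have hw : 0 < w j := hw₀ j
  have := hP.add_smul_sub_mem hyP hq (t := c / w j)
    ⟨by positivity, div_le_one_of_le₀ hj hw.le⟩
  convert this using 2
  rw [add_sub_cancel_left, smul_smul, div_mul_cancel₀ _ hw.ne']

variable [TopologicalSpace E] [IsTopologicalAddGroup E] [ContinuousConstSMul 𝕜 E]

theorem Convex.add_smul_mem_interior_of_lt (hP : Convex 𝕜 P) {y d : E} (hy : y ∈ interior P)
    {c c' : 𝕜} (hc : y + c • d ∈ P) (hc'₀ : 0 ≤ c') (hc' : c' < c) :
    y + c' • d ∈ interior P := by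
  have hc₀ : 0 < c := hc'₀.trans_lt hc'
  have := hP.add_smul_sub_mem_interior hc hy (t := 1 - c' / c)
    ⟨sub_pos.2 ((div_lt_one hc₀).2 hc'), sub_le_self _ (by positivity)⟩
  convert this using 1
  match_scalars <;> field_simp <;> ring

end Field

section KreinMilman

variable {E : Type*} [AddCommGroup E] [Module ℝ E] [TopologicalSpace E] [T2Space E]
  [IsTopologicalAddGroup E] [ContinuousSMul ℝ E] [LocallyConvexSpace ℝ E]

theorem Set.Finite.convexHull_extremePoints_convexHull {s : Set E} (hs : s.Finite) :
    convexHull ℝ ((convexHull ℝ s).extremePoints ℝ) = convexHull ℝ s := by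
  have hfin : ((convexHull ℝ s).extremePoints ℝ).Finite :=
    hs.subset extremePoints_convexHull_subset
  calc _ = closure (convexHull ℝ ((convexHull ℝ s).extremePoints ℝ)) :=
        (hfin.isCompact_convexHull ℝ).isClosed.closure_eq.symm
    _ = _ := closure_convexHull_extremePoints (hs.isCompact_convexHull ℝ) (convex_convexHull ℝ s)

end KreinMilman

theorem polytope_translate_extreme_point_general (n : ℕ) (s : Finset (Fin n → ℝ))
    (P : Set (Fin n → ℝ)) (hP : P = convexHull ℝ (s : Set (Fin n → ℝ))) :
    ∀ x ∈ interior (((n : ℝ) + 2) • P),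
      ∃ α : Fin n → ℝ,
        x ∈ Set.extremePoints ℝ ((fun p => α + p) '' P) ∧
        (fun p => α + p) '' P ⊆ interior (((n : ℝ) + 2) • P) := by
  intro x hx
  have hn : (0 : ℝ) < n + 2 := by positivity
  rw [interior_smul₀ hn.ne'] at hx ⊢
  obtain ⟨y, hy, rfl⟩ := hx
  have hconv : Convex ℝ P := hP ▸ convex_convexHull ℝ _
  have hyE : y ∈ convexHull ℝ (P.extremePoints ℝ) := by
    rw [hP, s.finite_toSet.convexHull_extremePoints_convexHull, ← hP]
    exact interior_subset hy
  obtain ⟨v, hv, hvP⟩ := hconv.exists_add_smul_sub_mem extremePoints_subset hyE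
  rw [finrank_fin_fun] at hvP
  refine ⟨((n : ℝ) + 2) • y - v, ?_, ?_⟩
  · simpa only [sub_add_cancel] using
      add_mem_extremePoints_image_add_left (a := ((n : ℝ) + 2) • y - v) hv
  rintro _ ⟨p, hp, rfl⟩
  have hmem : y + ((n : ℝ) + 2)⁻¹ • (p - v) ∈ interior P :=
    hconv.add_smul_mem_interior_of_lt hy (hvP p hp) (by positivity)
      (inv_strictAnti₀ (by positivity) (by linarith))
  convert smul_mem_smul_set (a := (n : ℝ) + 2) hmem using 1
  simp only [smul_add, smul_inv_smul₀ hn.ne']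
  abel

/-- **The homothety lemma for polytopes** : let `P ⊆ ℝ^n` be the convex hull of a finite
set of points with nonempty interior and let `P' = (n+2)·P`. Then every point `x` of the
interior of `P'` is an extreme point of a translate `α + P` of `P` contained in the
interior of `P'`. -/
theorem polytope_translate_extreme_point (n : ℕ) (s : Finset (Fin n → ℝ))
    (P : Set (Fin n → ℝ)) (hP : P = convexHull ℝ (s : Set (Fin n → ℝ)))
    (hint : (interior P).Nonempty) :
    ∀ x ∈ interior (((n : ℝ) + 2) • P),
      ∃ α : Fin n → ℝ,
        x ∈ Set.extremePoints ℝ ((fun p => α + p) '' P) ∧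
        (fun p => α + p) '' P ⊆ interior (((n : ℝ) + 2) • P) :=
  polytope_translate_extreme_point_general n s P hP
end

section
/- Fix integers n ≥ 2 and d ≥ 2, and consider the system F of n+1 tropical polynomials over ℝ in the variables x_1, …, x_n given by f_1(x) = min(0, x_1); f_{i+1}(x) = min(d·x_i, x_{i+1}) for 1 ≤ i ≤ n−1; and f_{n+1}(x) = min(0, 1 + x_n). Then F has no root in ℝ^n, yet the Macaulay tropical linear system M_N ⊙ y of F with N = (d−1)(n−1) has a solution. -/
open scoped Classical

/-- `y` is a solution of the Macaulay tropical linear system `M_N ⊙ y` of `F` over `ℝ`: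
for every `j` and every `J` with `|J| + deg f_j ≤ N`, the minimum over all `I` with
`|I| ≤ N` of `c_{f_j}(I-J) + y_I` is attained for at least two distinct `I`. -/
noncomputable def IsMacaulaySol {n k : ℕ} (F : Fin k → TropPoly n) (N : ℕ)
    (y : Exp n → ℝ) : Prop :=
  ∀ j : Fin k, ∀ J : Exp n, expDeg J + (F j).deg ≤ N →
    ∃ I₁ I₂ : Exp n, I₁ ≠ I₂ ∧ expDeg I₁ ≤ N ∧ expDeg I₂ ≤ N ∧
      macVal (F j) J (fun I => (y I : WithTop ℝ)) I₁ =
        macVal (F j) J (fun I => (y I : WithTop ℝ)) I₂ ∧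
      ∀ I : Exp n, expDeg I ≤ N →
        macVal (F j) J (fun I => (y I : WithTop ℝ)) I₁ ≤
          macVal (F j) J (fun I => (y I : WithTop ℝ)) I

/-- The Lazard–Mora–Philippon style system
`f_1 = min(0, x_1)`, `f_{i+1} = min(d·x_i, x_{i+1})` for `1 ≤ i ≤ n-1`, and
`f_{n+1} = min(0, 1 + x_n)`, as a family of `n+1` tropical polynomials in `n`
variables. -/
noncomputable def lbSys (n d : ℕ) (hn : 2 ≤ n) : Fin (n + 1) → TropPoly n := fun j =>
  if h0 : j.val = 0 then
    { supp := {0, Pi.single (⟨0, by omega⟩ : Fin n) 1},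
      supp_nonempty := Finset.insert_nonempty _ _,
      coeff := fun _ => 0 }
  else if hjn : j.val = n then
    { supp := {0, Pi.single (⟨n - 1, by omega⟩ : Fin n) 1},
      supp_nonempty := Finset.insert_nonempty _ _,
      coeff := fun I => if I = 0 then 0 else 1 }
  else
    { supp := {Pi.single (⟨j.val - 1, by have := j.isLt; omega⟩ : Fin n) d,
               Pi.single (⟨j.val, by have := j.isLt; omega⟩ : Fin n) 1},
      supp_nonempty := Finset.insert_nonempty _ _,
      coeff := fun _ => 0 }

section AuxLemmas
variable {n : ℕ}

lemma expDeg_zero : expDeg (0 : Exp n) = 0 := by simp [expDeg]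

lemma expDeg_single (i : Fin n) (k : ℕ) : expDeg (Pi.single i k : Exp n) = k := by
  simp [expDeg, Finset.sum_pi_single']

lemma expDeg_add (I J : Exp n) : expDeg (I + J) = expDeg I + expDeg J := by
  simp [expDeg, Finset.sum_add_distrib]

lemma zero_ne_single (i : Fin n) {k : ℕ} (hk : k ≠ 0) : (0 : Exp n) ≠ Pi.single i k := by
  intro h
  have := congrFun h i
  simp at this
  exact hk this.symm

lemma single_ne_single {i i' : Fin n} (h : i ≠ i') {k k' : ℕ} (hk : k ≠ 0) :
    (Pi.single i k : Exp n) ≠ Pi.single i' k' := by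
  intro he
  have := congrFun he i
  rw [Pi.single_eq_same, Pi.single_eq_of_ne h] at this
  exact hk this

lemma sum_single_mul_nat (i : Fin n) (k : ℕ) (g : Fin n → ℕ) :
    ∑ j, (Pi.single i k : Exp n) j * g j = k * g i := by
  rw [Fintype.sum_eq_single i]
  · simp
  · intro b hb; rw [Pi.single_eq_of_ne hb]; simp

lemma sum_single_mul_real (i : Fin n) (k : ℕ) (a : Fin n → ℝ) :
    ∑ j, (((Pi.single i k : Exp n) j : ℕ) : ℝ) * a j = (k : ℝ) * a i := by
  rw [Fintype.sum_eq_single i]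
  · simp
  · intro b hb; rw [Pi.single_eq_of_ne hb]; simp

lemma exp_add_sub_cancel (J s : Exp n) : (J + s) - J = s := by
  funext j
  simp

lemma exp_le_add (J s : Exp n) : J ≤ J + s := fun j => Nat.le_add_right _ _

lemma mod_pred_iff {D x : ℕ} (hD : 1 ≤ D) : x % D = D - 1 ↔ (x + 1) % D = 0 := by
  rcases Nat.lt_or_ge D 2 with h2 | h2
  · interval_cases D
    simp
  · have hr : x % D < D := Nat.mod_lt _ (by omega)
    have h1 : (x + 1) % D = (x % D + 1) % D := by
      conv_lhs => rw [Nat.add_mod]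
      rw [Nat.mod_eq_of_lt h2]
    constructor
    · intro h
      rw [h1, h]
      have hD1 : D - 1 + 1 = D := by omega
      rw [hD1, Nat.mod_self]
    · intro h
      by_contra hne
      have hlt : x % D + 1 < D := by omega
      rw [h1, Nat.mod_eq_of_lt hlt] at h
      omega

lemma digits_lb (d : ℕ) (hd : 2 ≤ d) :
    ∀ (k : ℕ) (c : ℕ → ℕ) (r : ℕ),
      (∑ t ∈ Finset.range k, c t * d ^ t + r) % d ^ k = d ^ k - 1 →
      (d - 1) * k ≤ (∑ t ∈ Finset.range k, c t) + r := by
  intro k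
  induction k with
  | zero => intro c r _; simp
  | succ k ih =>
    intro c r h
    obtain ⟨m', hm'⟩ : ∃ m', ∑ t ∈ Finset.range k, c (t + 1) * d ^ t = m' := ⟨_, rfl⟩
    have hS : ∑ t ∈ Finset.range (k + 1), c t * d ^ t = m' * d + c 0 := by
      rw [Finset.sum_range_succ', ← hm', Finset.sum_mul]
      congr 1
      · exact Finset.sum_congr rfl fun t _ => by ring
      · simp
    rw [hS] at h
    have hDpos : (1:ℕ) ≤ d ^ (k + 1) := Nat.one_le_pow _ _ (by omega)
    have hM1 : (m' * d + c 0 + r + 1) % d ^ (k + 1) = 0 := (mod_pred_iff hDpos).mp h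
    have hMd : (m' * d + c 0 + r + 1) % d = 0 := by
      have hdvd : d ∣ d ^ (k + 1) := dvd_pow_self d (Nat.succ_ne_zero k)
      have h2 := Nat.mod_mod_of_dvd (m' * d + c 0 + r + 1) hdvd
      rw [hM1, Nat.zero_mod] at h2
      exact h2.symm
    have hsd : (c 0 + r) % d = d - 1 := by
      have h3 : (m' * d + (c 0 + r)) % d = d - 1 := by
        apply (mod_pred_iff (by omega : (1:ℕ) ≤ d)).mpr
        have he : m' * d + (c 0 + r) + 1 = m' * d + c 0 + r + 1 := by ring
        rw [he]
        exact hMd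
      rwa [Nat.mul_add_mod' m' d _] at h3
    obtain ⟨q, hq⟩ : ∃ q, (c 0 + r) / d = q := ⟨_, rfl⟩
    have hdm : d * q + (d - 1) = c 0 + r := by
      have h4 := Nat.div_add_mod (c 0 + r) d
      rw [hq, hsd] at h4
      exact h4
    have hkey : m' * d + c 0 + r + 1 = d * (m' + q + 1) := by
      have h5 : d * (m' + q + 1) = m' * d + d * q + d := by ring
      omega
    have hdvd2 : d ^ k ∣ m' + q + 1 := by
      have hdvd : d ^ (k + 1) ∣ m' * d + c 0 + r + 1 := Nat.dvd_of_mod_eq_zero hM1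
      rw [hkey, pow_succ'] at hdvd
      exact (mul_dvd_mul_iff_left (show (d:ℕ) ≠ 0 by omega)).mp hdvd
    have hmod : (m' + q) % d ^ k = d ^ k - 1 := by
      apply (mod_pred_iff (Nat.one_le_pow _ _ (by omega))).mpr
      exact Nat.mod_eq_zero_of_dvd hdvd2
    have hih := ih (fun t => c (t + 1)) q (by
      show (∑ t ∈ Finset.range k, c (t + 1) * d ^ t + q) % d ^ k = d ^ k - 1
      rw [hm']
      exact hmod)
    have hih' : (d - 1) * k ≤ (∑ t ∈ Finset.range k, c (t + 1)) + q := by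
      simpa using hih
    have hsum : ∑ t ∈ Finset.range (k + 1), c t = (∑ t ∈ Finset.range k, c (t + 1)) + c 0 :=
      Finset.sum_range_succ' c k
    have hqd : q ≤ d * q := Nat.le_mul_of_pos_left q (by omega)
    have hmul : (d - 1) * (k + 1) = (d - 1) * k + (d - 1) := by ring
    omega
end AuxLemmas

section ValE
variable {n : ℕ}

/-- The `d`-adic value of an exponent vector. -/
def valE (d : ℕ) {n : ℕ} (I : Exp n) : ℕ := ∑ j, I j * d ^ (j : ℕ)

lemma valE_add_single (d : ℕ) (I : Exp n) (i : Fin n) (k : ℕ) :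
    valE d (I + Pi.single i k) = valE d I + k * d ^ (i : ℕ) := by
  unfold valE
  rw [← sum_single_mul_nat i k (fun j => d ^ (j : ℕ)), ← Finset.sum_add_distrib]
  exact Finset.sum_congr rfl fun j _ => by simp [add_mul]

lemma expDeg_eq_range (J : Exp n) (c : ℕ → ℕ) (hc : ∀ (t : ℕ) (ht : t < n), c t = J ⟨t, ht⟩) :
    expDeg J = ∑ t ∈ Finset.range n, c t := by
  rw [expDeg, ← Fin.sum_univ_eq_sum_range c n]
  exact Finset.sum_congr rfl fun i _ => by rw [hc i.val i.isLt]

lemma valE_eq_range (d : ℕ) (J : Exp n) (c : ℕ → ℕ)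
    (hc : ∀ (t : ℕ) (ht : t < n), c t = J ⟨t, ht⟩) :
    valE d J = ∑ t ∈ Finset.range n, c t * d ^ t := by
  rw [valE, ← Fin.sum_univ_eq_sum_range (fun t => c t * d ^ t) n]
  exact Finset.sum_congr rfl fun i _ => by rw [hc i.val i.isLt]

lemma valE_mod_ne {d : ℕ} (hn : 2 ≤ n) (hd : 2 ≤ d) (J : Exp n)
    (hJ : expDeg J < (d - 1) * (n - 1)) : valE d J % d ^ (n - 1) ≠ d ^ (n - 1) - 1 := by
  intro h
  obtain ⟨c, hc⟩ : ∃ c : ℕ → ℕ, ∀ (t : ℕ) (ht : t < n), c t = J ⟨t, ht⟩ :=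
    ⟨fun t => if ht : t < n then J ⟨t, ht⟩ else 0, fun t ht => dif_pos ht⟩
  have hval := valE_eq_range d J c hc
  have hsplit : ∑ t ∈ Finset.range n, c t * d ^ t
      = ∑ t ∈ Finset.range (n - 1), c t * d ^ t + c (n - 1) * d ^ (n - 1) := by
    conv_lhs => rw [show n = (n - 1) + 1 by omega, Finset.sum_range_succ]
  have hmod : (∑ t ∈ Finset.range (n - 1), c t * d ^ t + 0) % d ^ (n - 1) = d ^ (n - 1) - 1 := by
    rw [hval, hsplit, Nat.add_mul_mod_self_right] at h
    simpa using h
  have hlb := digits_lb d hd (n - 1) c 0 hmod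
  have hle : ∑ t ∈ Finset.range (n - 1), c t ≤ ∑ t ∈ Finset.range n, c t :=
    Finset.sum_le_sum_of_subset (Finset.range_subset_range.2 (by omega))
  have hdeg := expDeg_eq_range J c hc
  omega

lemma div_succ_eq {v D : ℕ} (hD : 1 ≤ D) (h : v % D ≠ D - 1) : (v + 1) / D = v / D := by
  rw [Nat.succ_div]
  have hnd : ¬ D ∣ v + 1 := by
    intro hdvd
    exact h ((mod_pred_iff hD).mpr (Nat.mod_eq_zero_of_dvd hdvd))
  simp [hnd]

end ValE

section TropLemmas
variable {n : ℕ}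

lemma mono_zero (f : TropPoly n) (a : Fin n → ℝ) : f.mono 0 a = f.coeff 0 := by
  simp [TropPoly.mono]

lemma mono_single (f : TropPoly n) (i : Fin n) (k : ℕ) (a : Fin n → ℝ) :
    f.mono (Pi.single i k) a = f.coeff (Pi.single i k) + (k : ℝ) * a i := by
  rw [TropPoly.mono, sum_single_mul_real]

lemma root_pair {f : TropPoly n} {p q : Exp n} (hsupp : f.supp = {p, q})
    {a : Fin n → ℝ} (h : f.IsRoot a) : f.mono p a = f.mono q a := by
  obtain ⟨I, hI, J, hJ, hIJ, hIe, hJe⟩ := h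
  rw [hsupp, Finset.mem_insert, Finset.mem_singleton] at hI hJ
  rcases hI with rfl | rfl <;> rcases hJ with rfl | rfl
  · exact absurd rfl hIJ
  · exact hIe.trans hJe.symm
  · exact hJe.trans hIe.symm
  · exact absurd rfl hIJ

lemma shiftCoeff_add {f : TropPoly n} {s : Exp n} (hs : s ∈ f.supp) (J : Exp n) :
    shiftCoeff f J (J + s) = (f.coeff s : WithTop ℝ) := by
  rw [shiftCoeff, if_pos ⟨exp_le_add J s, by rw [exp_add_sub_cancel]; exact hs⟩,
    exp_add_sub_cancel]

lemma shiftCoeff_eq_top {f : TropPoly n} {J I : Exp n}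
    (h : ∀ s ∈ f.supp, I ≠ J + s) : shiftCoeff f J I = ⊤ := by
  rw [shiftCoeff, if_neg]
  rintro ⟨hle, hmem⟩
  exact h _ hmem (funext fun j => (Nat.add_sub_cancel' (hle j)).symm)

lemma mac_case {f : TropPoly n} {p q : Exp n} (hsupp : f.supp = {p, q})
    (N : ℕ) (J : Exp n) (y : Exp n → ℝ)
    (hne : J + p ≠ J + q) (h1 : expDeg (J + p) ≤ N) (h2 : expDeg (J + q) ≤ N)
    (heq : (f.coeff p : WithTop ℝ) + ((y (J + p) : ℝ) : WithTop ℝ)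
         = (f.coeff q : WithTop ℝ) + ((y (J + q) : ℝ) : WithTop ℝ)) :
    ∃ I₁ I₂ : Exp n, I₁ ≠ I₂ ∧ expDeg I₁ ≤ N ∧ expDeg I₂ ≤ N ∧
      macVal f J (fun I => (y I : WithTop ℝ)) I₁ =
        macVal f J (fun I => (y I : WithTop ℝ)) I₂ ∧
      ∀ I : Exp n, expDeg I ≤ N →
        macVal f J (fun I => (y I : WithTop ℝ)) I₁ ≤
          macVal f J (fun I => (y I : WithTop ℝ)) I := by
  have hp : p ∈ f.supp := by rw [hsupp]; exact Finset.mem_insert_self _ _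
  have hq : q ∈ f.supp := by rw [hsupp]; exact Finset.mem_insert_of_mem (Finset.mem_singleton_self _)
  have hvp : macVal f J (fun I => (y I : WithTop ℝ)) (J + p)
      = (f.coeff p : WithTop ℝ) + ((y (J + p) : ℝ) : WithTop ℝ) := by
    rw [macVal, shiftCoeff_add hp]
  have hvq : macVal f J (fun I => (y I : WithTop ℝ)) (J + q)
      = (f.coeff q : WithTop ℝ) + ((y (J + q) : ℝ) : WithTop ℝ) := by
    rw [macVal, shiftCoeff_add hq]
  have hvpq : macVal f J (fun I => (y I : WithTop ℝ)) (J + p)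
      = macVal f J (fun I => (y I : WithTop ℝ)) (J + q) := by
    rw [hvp, hvq, heq]
  refine ⟨J + p, J + q, hne, h1, h2, hvpq, ?_⟩
  intro I _
  by_cases hc : I = J + p ∨ I = J + q
  · rcases hc with rfl | rfl
    · exact le_refl _
    · exact le_of_eq hvpq
  · push_neg at hc
    have htop : shiftCoeff f J I = ⊤ := by
      apply shiftCoeff_eq_top
      intro s hs
      rw [hsupp, Finset.mem_insert, Finset.mem_singleton] at hs
      rcases hs with rfl | rfl
      · exact hc.1
      · exact hc.2
    simp only [macVal, htop, top_add]
    exact le_top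

end TropLemmas

section Part1
variable {n d : ℕ}

lemma lbSys_no_root (n d : ℕ) (hn : 2 ≤ n) (hd : 2 ≤ d) :
    ¬ ∃ a : Fin n → ℝ, ∀ j : Fin (n + 1), (lbSys n d hn j).IsRoot a := by
  rintro ⟨a, ha⟩
  -- first equation : a 0 = 0
  have h0 : a ⟨0, by omega⟩ = 0 := by
    have hj := ha ⟨0, by omega⟩
    have hsupp : (lbSys n d hn ⟨0, by omega⟩).supp
        = {(0 : Exp n), Pi.single (⟨0, by omega⟩ : Fin n) 1} := by
      simp [lbSys]
    have hcoeff : (lbSys n d hn ⟨0, by omega⟩).coeff = fun _ => 0 := by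
      simp [lbSys]
    have h := root_pair hsupp hj
    rw [mono_zero, mono_single, hcoeff] at h
    simpa using h.symm
  -- middle equations
  have hmid : ∀ m : ℕ, ∀ hm : m + 1 < n,
      d * a ⟨m, by omega⟩ = a ⟨m + 1, hm⟩ := by
    intro m hm
    have hj := ha ⟨m + 1, by omega⟩
    have hne0 : ¬ ((⟨m + 1, by omega⟩ : Fin (n + 1)).val = 0) := by simp
    have hnen : ¬ ((⟨m + 1, by omega⟩ : Fin (n + 1)).val = n) := by simp; omega
    have hsupp : (lbSys n d hn ⟨m + 1, by omega⟩).supp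
        = {Pi.single (⟨m, by omega⟩ : Fin n) d, Pi.single (⟨m + 1, hm⟩ : Fin n) 1} := by
      simp only [lbSys]
      rw [dif_neg hne0, dif_neg hnen]
      simp
    have hcoeff : (lbSys n d hn ⟨m + 1, by omega⟩).coeff = fun _ => 0 := by
      simp only [lbSys]
      rw [dif_neg hne0, dif_neg hnen]
    have h := root_pair hsupp hj
    rw [mono_single, mono_single, hcoeff] at h
    simpa using h
  -- last equation
  have hlast : (0 : ℝ) = 1 + a ⟨n - 1, by omega⟩ := by
    have hj := ha ⟨n, by omega⟩
    have hne0 : ¬ ((⟨n, by omega⟩ : Fin (n + 1)).val = 0) := by simp; omega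
    have hsupp : (lbSys n d hn ⟨n, by omega⟩).supp
        = {(0 : Exp n), Pi.single (⟨n - 1, by omega⟩ : Fin n) 1} := by
      simp only [lbSys]
      rw [dif_neg hne0]
      simp
    have hcoeff : (lbSys n d hn ⟨n, by omega⟩).coeff
        = fun I => if I = 0 then (0 : ℝ) else 1 := by
      simp only [lbSys]
      rw [dif_neg hne0]
      simp
    have h := root_pair hsupp hj
    rw [mono_zero, mono_single, hcoeff] at h
    have hne : (Pi.single (⟨n - 1, by omega⟩ : Fin n) 1 : Exp n) ≠ 0 :=
      (zero_ne_single _ one_ne_zero).symm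
    simp [hne] at h
    linarith
  -- everything is zero
  have hz : ∀ m : ℕ, ∀ hm : m < n, a ⟨m, hm⟩ = 0 := by
    intro m
    induction m with
    | zero => intro hm; exact h0
    | succ m ihm =>
      intro hm
      have := hmid m hm
      rw [ihm (by omega)] at this
      rw [← this]
      ring
  have := hz (n - 1) (by omega)
  rw [this] at hlast
  norm_num at hlast

end Part1

lemma coe_add_eq {a b c e : ℝ} (h : a + b = c + e) :
    (a : WithTop ℝ) + (b : WithTop ℝ) = (c : WithTop ℝ) + (e : WithTop ℝ) := by
  rw [← WithTop.coe_add, ← WithTop.coe_add, h]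

lemma lbSys_macaulay (n d : ℕ) (hn : 2 ≤ n) (hd : 2 ≤ d) :
    ∃ y : Exp n → ℝ, IsMacaulaySol (lbSys n d hn) ((d - 1) * (n - 1)) y := by
  have hDpos : (1:ℕ) ≤ d ^ (n - 1) := Nat.one_le_pow _ _ (by omega)
  refine ⟨fun I => -(((valE d I / d ^ (n - 1) : ℕ) : ℝ)), ?_⟩
  intro j J hJ
  by_cases h0 : j.val = 0
  · -- f_1 = min(0, x_1)
    have hsupp : (lbSys n d hn j).supp
        = {(0 : Exp n), Pi.single (⟨0, by omega⟩ : Fin n) 1} := by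
      simp [lbSys, h0]
    have hcoeff : (lbSys n d hn j).coeff = fun _ => 0 := by simp [lbSys, h0]
    have hqm : (Pi.single (⟨0, by omega⟩ : Fin n) 1 : Exp n) ∈ (lbSys n d hn j).supp := by
      rw [hsupp]; exact Finset.mem_insert_of_mem (Finset.mem_singleton_self _)
    have hdeg1 : 1 ≤ (lbSys n d hn j).deg := by
      have := Finset.le_sup (f := expDeg) hqm
      rwa [expDeg_single] at this
    have hv : valE d (J + Pi.single (⟨0, by omega⟩ : Fin n) 1) = valE d J + 1 := by
      rw [valE_add_single]; simp
    have hdiv : valE d (J + Pi.single (⟨0, by omega⟩ : Fin n) 1) / d ^ (n - 1)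
        = valE d J / d ^ (n - 1) := by
      rw [hv]
      exact div_succ_eq hDpos (valE_mod_ne hn hd J (by omega))
    apply mac_case hsupp
    · intro h
      exact zero_ne_single (⟨0, by omega⟩ : Fin n) one_ne_zero (add_left_cancel h)
    · rw [add_zero]; omega
    · rw [expDeg_add, expDeg_single]; omega
    · apply coe_add_eq
      rw [hcoeff]
      simp only [add_zero, hdiv]
  · by_cases hjn : j.val = n
    · -- f_{n+1} = min(0, 1 + x_n)
      have hsupp : (lbSys n d hn j).supp
          = {(0 : Exp n), Pi.single (⟨n - 1, by omega⟩ : Fin n) 1} := by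
        simp [lbSys, h0, hjn, show ¬ n = 0 by omega]
      have hcoeff : (lbSys n d hn j).coeff = fun I => if I = 0 then (0:ℝ) else 1 := by
        simp [lbSys, h0, hjn, show ¬ n = 0 by omega]
      have hqm : (Pi.single (⟨n - 1, by omega⟩ : Fin n) 1 : Exp n) ∈ (lbSys n d hn j).supp := by
        rw [hsupp]; exact Finset.mem_insert_of_mem (Finset.mem_singleton_self _)
      have hdeg1 : 1 ≤ (lbSys n d hn j).deg := by
        have := Finset.le_sup (f := expDeg) hqm
        rwa [expDeg_single] at this
      have hv : valE d (J + Pi.single (⟨n - 1, by omega⟩ : Fin n) 1)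
          = valE d J + d ^ (n - 1) := by
        rw [valE_add_single]; simp
      have hdiv : valE d (J + Pi.single (⟨n - 1, by omega⟩ : Fin n) 1) / d ^ (n - 1)
          = valE d J / d ^ (n - 1) + 1 := by
        rw [hv]
        exact Nat.add_div_right _ (by omega)
      apply mac_case hsupp
      · intro h
        exact zero_ne_single (⟨n - 1, by omega⟩ : Fin n) one_ne_zero (add_left_cancel h)
      · rw [add_zero]; omega
      · rw [expDeg_add, expDeg_single]; omega
      · apply coe_add_eq
        rw [hcoeff]
        have hne : (Pi.single (⟨n - 1, by omega⟩ : Fin n) 1 : Exp n) ≠ 0 :=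
          (zero_ne_single _ one_ne_zero).symm
        simp only [if_pos rfl, if_neg hne, add_zero, hdiv]
        push_cast
        ring
    · -- f_{i+1} = min(d x_i, x_{i+1})
      have hjlt : j.val < n := by have := j.isLt; omega
      have hj1 : 1 ≤ j.val := by omega
      have hsupp : (lbSys n d hn j).supp
          = {Pi.single (⟨j.val - 1, by omega⟩ : Fin n) d,
             Pi.single (⟨j.val, hjlt⟩ : Fin n) 1} := by
        simp only [lbSys]
        rw [dif_neg h0, dif_neg hjn]
      have hcoeff : (lbSys n d hn j).coeff = fun _ => 0 := by
        simp only [lbSys]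
        rw [dif_neg h0, dif_neg hjn]
      have hpm : (Pi.single (⟨j.val - 1, by omega⟩ : Fin n) d : Exp n)
          ∈ (lbSys n d hn j).supp := by
        rw [hsupp]; exact Finset.mem_insert_self _ _
      have hdegd : d ≤ (lbSys n d hn j).deg := by
        have := Finset.le_sup (f := expDeg) hpm
        rwa [expDeg_single] at this
      have hpow : d * d ^ (j.val - 1) = 1 * d ^ j.val := by
        rw [one_mul, ← pow_succ']
        congr 1
        omega
      have hvv : valE d (J + Pi.single (⟨j.val - 1, by omega⟩ : Fin n) d)
          = valE d (J + Pi.single (⟨j.val, hjlt⟩ : Fin n) 1) := by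
        rw [valE_add_single, valE_add_single]
        show valE d J + d * d ^ (j.val - 1) = valE d J + 1 * d ^ j.val
        rw [hpow]
      apply mac_case hsupp
      · intro h
        have := add_left_cancel h
        exact single_ne_single (Fin.ne_of_val_ne (by simp; omega)) (by omega : d ≠ 0) this
      · rw [expDeg_add, expDeg_single]; omega
      · rw [expDeg_add, expDeg_single]; omega
      · apply coe_add_eq
        rw [hcoeff]
        simp only [hvv]


/-- **Lower bound over ℝ** : for all `n, d ≥ 2` the system `F = lbSys n d` of `n+1`
tropical polynomials of degree at most `d` in `n` variables has no root in `ℝ^n`, yet its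
Macaulay tropical linear system `M_N ⊙ y` with `N = (d-1)(n-1)` has a solution. -/
theorem tropical_nullstellensatz_lower_bound_real (n d : ℕ) (hn : 2 ≤ n) (hd : 2 ≤ d) :
    (¬ ∃ a : Fin n → ℝ, ∀ j : Fin (n + 1), (lbSys n d hn j).IsRoot a) ∧
    (∃ y : Exp n → ℝ, IsMacaulaySol (lbSys n d hn) ((d - 1) * (n - 1)) y) := by
  exact ⟨lbSys_no_root n d hn hd, lbSys_macaulay n d hn hd⟩
end
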